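/- arXiv:2509.20495 — 6 statements merged into one kernel-verified Lean document; each statement's English description precedes it below -/
import Mathlib

section
/- Fix integers k,l ≥ 1. There exists a constant C > 0 such that for all n ≥ 1, |p_{k,l}(2,n) − 2^{k−1}·n^{k+l−2}/(l!·k!·(k+l−2)!)| ≤ C·n^{k+l−3}; in other words p_{k,l}(2,n) = 2^{k−1}n^{k+l−2}/(l!·k!·(k+l−2)!) + O(n^{k+l−3}). -/
/-- A rectangle with integer corners: `(a, b, c, d)` represents `[a,b] × [c,d] ⊆ ℝ²`
(with `a < b`, `c < d` required in `IsTiling`). -/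
abbrev Rect : Type := ℕ × ℕ × ℕ × ℕ

/-- The unit cell `[i,i+1] × [j,j+1]` lies inside the rectangle `R`. -/
def cellIn (R : Rect) (i j : ℕ) : Prop :=
  R.1 ≤ i ∧ i < R.2.1 ∧ R.2.2.1 ≤ j ∧ j < R.2.2.2

/-- `T` is a tiling of `[0,m] × [0,n]`: each rectangle has positive integer side lengths
and lies inside `[0,m] × [0,n]`, and every unit cell of `[0,m] × [0,n]` is covered by
exactly one rectangle of `T` (equivalently, the rectangles have pairwise disjoint
interiors and their union is `[0,m] × [0,n]`). -/
def IsTiling (m n : ℕ) (T : Finset Rect) : Prop :=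
  (∀ R ∈ T, R.1 < R.2.1 ∧ R.2.1 ≤ m ∧ R.2.2.1 < R.2.2.2 ∧ R.2.2.2 ≤ n) ∧
  ∀ i < m, ∀ j < n, ∃! R, R ∈ T ∧ cellIn R i j

/-- The block of a rectangle: the unordered pair of its side lengths,
recorded as a sorted pair `(min, max)`. -/
def blockOf (R : Rect) : ℕ × ℕ :=
  (min (R.2.1 - R.1) (R.2.2.2 - R.2.2.1), max (R.2.1 - R.1) (R.2.2.2 - R.2.2.1))

/-- The block multiset of a tiling. -/
def blocksOf (T : Finset Rect) : Multiset (ℕ × ℕ) := T.val.map blockOf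

/-- The number of distinct block multisets of tilings of `[0,m] × [0,n]` all of whose
blocks satisfy the predicate `allowed` (as sorted pairs of side lengths). -/
noncomputable def rectPA (m n : ℕ) (allowed : ℕ × ℕ → Prop) : ℕ :=
  Nat.card {M : Multiset (ℕ × ℕ) |
    ∃ T : Finset Rect, IsTiling m n T ∧ blocksOf T = M ∧ ∀ b ∈ M, allowed b}

/-- The rectangular partition function `p(m,n)`: the number of distinct block multisets
of tilings of `[0,m] × [0,n]`. -/
noncomputable def rectP (m n : ℕ) : ℕ :=
  Nat.card {M : Multiset (ℕ × ℕ) | ∃ T : Finset Rect, IsTiling m n T ∧ blocksOf T = M}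

/-- The Euler partition function `p(n)`. -/
def eulerP (n : ℕ) : ℕ := Fintype.card (Nat.Partition n)

/-- `p_{k,l}(2,n)`: the number of distinct block multisets of tilings of `[0,2] × [0,n]`
using only blocks with side lengths `{1,i}` for `1 ≤ i ≤ k` or `{2,j}` for `2 ≤ j ≤ l`. -/
noncomputable def pkl (k l n : ℕ) : ℕ :=
  rectPA 2 n (fun b => (b.1 = 1 ∧ 1 ≤ b.2 ∧ b.2 ≤ k) ∨ (b.1 = 2 ∧ 2 ≤ b.2 ∧ b.2 ≤ l))

-- ===== auxiliary development =====

section Aux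


/-- dot product of weight list and count list -/
def dotL (ws v : List ℕ) : ℕ := (List.zipWith (· * ·) ws v).sum

/-- Finset of solution vectors -/
def Sol : List ℕ → ℕ → Finset (List ℕ)
  | [], N => if N = 0 then {[]} else ∅
  | w :: ws, N => (Finset.range (N / w + 1)).biUnion
      (fun t => (Sol ws (N - w * t)).image (t :: ·))

def Acnt (ws : List ℕ) (N : ℕ) : ℕ := (Sol ws N).card

lemma Acnt_nil (N : ℕ) : Acnt [] N = if N = 0 then 1 else 0 := by
  unfold Acnt Sol; split <;> simp

lemma Acnt_cons (w : ℕ) (ws : List ℕ) (N : ℕ) :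
    Acnt (w :: ws) N = ∑ t ∈ Finset.range (N / w + 1), Acnt ws (N - w * t) := by
  unfold Acnt
  show (Sol (w :: ws) N).card = _
  rw [show Sol (w :: ws) N = (Finset.range (N / w + 1)).biUnion
      (fun t => (Sol ws (N - w * t)).image (t :: ·)) from rfl]
  rw [Finset.card_biUnion]
  · refine Finset.sum_congr rfl fun t _ => ?_
    exact Finset.card_image_of_injective _ (fun a b h => by simpa using h)
  · intro a _ b _ hab
    simp only [Finset.disjoint_left]
    intro v hv hv'
    simp only [Finset.mem_image] at hv hv'
    obtain ⟨x, _, rfl⟩ := hv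
    obtain ⟨y, _, h⟩ := hv'
    exact hab (by simpa using (List.cons.injEq _ _ _ _ ▸ h.symm).1 ▸ rfl)

lemma mem_Sol_iff {ws : List ℕ} (hws : ∀ w ∈ ws, 1 ≤ w) {N : ℕ} {v : List ℕ} :
    v ∈ Sol ws N ↔ v.length = ws.length ∧ dotL ws v = N := by
  induction ws generalizing N v with
  | nil =>
    show v ∈ (if N = 0 then ({[]} : Finset (List ℕ)) else ∅) ↔ _
    split <;> simp_all [dotL] <;> omega
  | cons w ws ih =>
    have hw : 1 ≤ w := hws w (by simp)
    have hws' : ∀ w ∈ ws, 1 ≤ w := fun x hx => hws x (by simp [hx])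
    show v ∈ (Finset.range (N / w + 1)).biUnion _ ↔ _
    simp only [Finset.mem_biUnion, Finset.mem_image, Finset.mem_range]
    constructor
    · rintro ⟨t, ht, v', hv', rfl⟩
      rw [ih hws'] at hv'
      have htN : w * t ≤ N := by
        calc w * t ≤ w * (N / w) := Nat.mul_le_mul_left _ (by omega)
        _ ≤ N := Nat.mul_div_le N w
      simp only [List.length_cons, dotL, List.zipWith_cons_cons, List.sum_cons]
      refine ⟨by simp [hv'.1], ?_⟩
      have := hv'.2
      unfold dotL at this
      omega
    · rintro ⟨hlen, hdot⟩
      match v with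
      | [] => simp at hlen
      | t :: v' =>
        simp only [dotL, List.zipWith_cons_cons, List.sum_cons] at hdot
        have htN : w * t ≤ N := by omega
        refine ⟨t, ?_, v', ?_, rfl⟩
        · have : t ≤ N / w := (Nat.le_div_iff_mul_le hw).2 (by rw [mul_comm]; omega)
          omega
        · rw [ih hws']
          constructor
          · simpa using hlen
          · unfold dotL; omega

lemma Acnt_le (ws : List ℕ) (N : ℕ) : Acnt ws N ≤ (N + 1) ^ ws.length := by
  induction ws generalizing N with
  | nil => rw [Acnt_nil]; split <;> simp
  | cons w ws ih =>
    rw [Acnt_cons]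
    calc ∑ t ∈ Finset.range (N / w + 1), Acnt ws (N - w * t)
        ≤ ∑ _t ∈ Finset.range (N / w + 1), (N + 1) ^ ws.length := by
          refine Finset.sum_le_sum fun t _ => le_trans (ih _) ?_
          exact Nat.pow_le_pow_left (by omega) _
      _ = (N / w + 1) * (N + 1) ^ ws.length := by simp [mul_comm]
      _ ≤ (N + 1) * (N + 1) ^ ws.length := by
          have : N / w ≤ N := Nat.div_le_self N w
          exact Nat.mul_le_mul_right _ (by omega)
      _ = (N + 1) ^ (w :: ws).length := by rw [List.length_cons, pow_succ, mul_comm]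


lemma lemA : ∀ (e y c : ℕ), (y + c)^(e+1) ≤ y^(e+1) + (e+1) * c * (y+c)^e := by
  intro e
  induction e with
  | zero => intro y c; simp
  | succ e ih =>
    intro y c
    calc (y + c)^(e+2) = (y+c)^(e+1) * (y+c) := by ring
      _ ≤ (y^(e+1) + (e+1) * c * (y+c)^e) * (y+c) := Nat.mul_le_mul_right _ (ih y c)
      _ = y^(e+1) * y + c * y^(e+1) + (e+1) * c * (y+c)^(e+1) := by ring
      _ ≤ y^(e+2) + c * (y+c)^(e+1) + (e+1) * c * (y+c)^(e+1) := by
          have : y^(e+1) ≤ (y+c)^(e+1) := Nat.pow_le_pow_left (by omega) _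
          have h2 : c * y^(e+1) ≤ c * (y+c)^(e+1) := Nat.mul_le_mul_left _ this
          have h3 : y^(e+1) * y = y^(e+2) := by ring
          omega
      _ = y^(e+2) + (e+2) * c * (y+c)^(e+1) := by ring

lemma lemB : ∀ (e y c : ℕ), y^(e+1) + (e+1) * c * y^e ≤ (y + c)^(e+1) := by
  intro e
  induction e with
  | zero => intro y c; simp
  | succ e ih =>
    intro y c
    calc y^(e+2) + (e+2) * c * y^(e+1)
        ≤ y^(e+2) + (e+2) * c * y^(e+1) + (e+1) * c * c * y^e := Nat.le_add_right _ _
      _ = (y^(e+1) + (e+1) * c * y^e) * (y + c) := by ring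
      _ ≤ (y+c)^(e+1) * (y+c) := Nat.mul_le_mul_right _ (ih y c)
      _ = (y+c)^(e+2) := by ring

lemma wT_lt (N w : ℕ) (hw : 1 ≤ w) : N < w * (N / w + 1) := by
  have h1 := Nat.div_add_mod N w
  have h2 : N % w < w := Nat.mod_lt _ (by omega)
  have : w * (N / w + 1) = w * (N / w) + w := by ring
  omega

/-- The key discrete integral estimate. -/
lemma sum_pow_bounds (N w e : ℕ) (hw : 1 ≤ w) :
    ((N:ℝ))^(e+1) ≤ ((e:ℝ)+1) * w * (∑ t ∈ Finset.range (N / w + 1), ((N - w*t : ℕ) : ℝ)^e)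
    ∧ ((e:ℝ)+1) * w * (∑ t ∈ Finset.range (N / w + 1), ((N - w*t : ℕ) : ℝ)^e)
      ≤ (N:ℝ)^(e+1) + ((e:ℝ)+1) * w * (N:ℝ)^e := by
  set T := N / w with hT
  have hfT1 : N - w * (T + 1) = 0 := by
    have h := wT_lt N w hw
    rw [← hT] at h
    omega
  have htele : ∑ t ∈ Finset.range (T+1),
      (((N - w*t : ℕ):ℝ)^(e+1) - ((N - w*(t+1) : ℕ):ℝ)^(e+1)) = (N:ℝ)^(e+1) := by
    rw [Finset.sum_range_sub' (f := fun t => ((N - w*t : ℕ):ℝ)^(e+1))]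
    simp [hfT1]
  constructor
  · rw [← htele]
    rw [Finset.mul_sum]
    refine Finset.sum_le_sum fun t _ => ?_
    -- pointwise: x^(e+1) - y^(e+1) ≤ (e+1) * w * x^e
    set x := N - w * t with hx
    set y := N - w * (t+1) with hy
    have hmul : w * (t+1) = w * t + w := by ring
    have hyx : y ≤ x := by omega
    have hc : x - y ≤ w := by omega
    have hnat : x^(e+1) ≤ y^(e+1) + (e+1) * w * x^e := by
      have := lemA e y (x - y)
      have hxy : y + (x - y) = x := by omega
      rw [hxy] at this
      calc x^(e+1) ≤ y^(e+1) + (e+1) * (x-y) * x^e := this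
        _ ≤ y^(e+1) + (e+1) * w * x^e := by
            have : (e+1) * (x-y) * x^e ≤ (e+1) * w * x^e :=
              Nat.mul_le_mul_right _ (Nat.mul_le_mul_left _ hc)
            omega
    have := (Nat.cast_le (α := ℝ)).2 hnat
    push_cast at this
    linarith
  · -- upper bound
    rw [Finset.mul_sum]
    rw [Finset.sum_range_succ' (fun t => ((e:ℝ)+1) * w * ((N - w*t : ℕ):ℝ)^e)]
    have hlast : ((e:ℝ)+1) * w * ((N - w*0 : ℕ):ℝ)^e = ((e:ℝ)+1) * w * (N:ℝ)^e := by
      norm_num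
    rw [hlast]
    have hmain : ∑ t ∈ Finset.range T, ((e:ℝ)+1) * w * ((N - w*(t+1) : ℕ):ℝ)^e
        ≤ (N:ℝ)^(e+1) := by
      have h2 : ∑ t ∈ Finset.range T,
          (((N - w*t : ℕ):ℝ)^(e+1) - ((N - w*(t+1) : ℕ):ℝ)^(e+1))
          = (N:ℝ)^(e+1) - ((N - w*T : ℕ):ℝ)^(e+1) := by
        rw [Finset.sum_range_sub' (f := fun t => ((N - w*t : ℕ):ℝ)^(e+1))]
        simp
      calc ∑ t ∈ Finset.range T, ((e:ℝ)+1) * w * ((N - w*(t+1) : ℕ):ℝ)^e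
          ≤ ∑ t ∈ Finset.range T,
            (((N - w*t : ℕ):ℝ)^(e+1) - ((N - w*(t+1) : ℕ):ℝ)^(e+1)) := by
            refine Finset.sum_le_sum fun t ht => ?_
            set x := N - w * t with hx
            set y := N - w * (t+1) with hy
            have htT : t + 1 ≤ T := by
              simp only [Finset.mem_range] at ht; omega
            have hwt : w * (t+1) ≤ N := by
              calc w * (t+1) ≤ w * T := Nat.mul_le_mul_left _ htT
                _ ≤ N := Nat.mul_div_le N w
            have hmul : w * (t+1) = w * t + w := by ring
            have hxy : y + w = x := by omega
            have hnat : y^(e+1) + (e+1) * w * y^e ≤ x^(e+1) := by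
              have := lemB e y w
              rwa [hxy] at this
            have := (Nat.cast_le (α := ℝ)).2 hnat
            push_cast at this
            linarith
        _ = (N:ℝ)^(e+1) - ((N - w*T : ℕ):ℝ)^(e+1) := h2
        _ ≤ (N:ℝ)^(e+1) := by
            have : (0:ℝ) ≤ ((N - w*T : ℕ):ℝ)^(e+1) := by positivity
            linarith
    linarith

lemma Acnt_zero (ws : List ℕ) : Acnt ws 0 = 1 := by
  induction ws with
  | nil => simp [Acnt_nil]
  | cons w ws ih => rw [Acnt_cons]; simp [Nat.zero_div, ih]

lemma Acnt_one (N : ℕ) : Acnt [1] N = 1 := by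
  rw [Acnt_cons]
  have : ∀ t ∈ Finset.range (N / 1 + 1), Acnt [] (N - 1 * t) =
      if t = N then 1 else 0 := by
    intro t ht
    simp only [Finset.mem_range, Nat.div_one] at ht
    rw [Acnt_nil]
    congr 1
    simp only [eq_iff_iff]
    omega
  rw [Finset.sum_congr rfl this, Finset.sum_ite_eq' (Finset.range (N/1+1)) N (fun _ => 1)]
  simp

set_option maxHeartbeats 2000000 in
lemma asymp (ws : List ℕ) (h : ∀ w ∈ ws, 1 ≤ w) :
    ∃ C : ℝ, 0 < C ∧ ∀ N : ℕ, 1 ≤ N →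
      |(Acnt (ws ++ [1]) N : ℝ) -
        (N:ℝ)^ws.length / ((Nat.factorial ws.length : ℝ) * (ws.prod : ℝ))|
        ≤ C * (N:ℝ)^(ws.length - 1) := by
  induction ws with
  | nil =>
    refine ⟨1, one_pos, fun N hN => ?_⟩
    simp [Acnt_one]
  | cons w ws' ih =>
    have hw : 1 ≤ w := h w (by simp)
    have hws' : ∀ x ∈ ws', 1 ≤ x := fun x hx => h x (by simp [hx])
    have hwR : (1:ℝ) ≤ (w:ℝ) := by exact_mod_cast hw
    by_cases hemp : ws' = []
    · -- ws = [w] : count is N/w + 1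
      subst hemp
      refine ⟨2, by norm_num, fun N hN => ?_⟩
      have hA : Acnt ([w] ++ [1]) N = N / w + 1 := by
        show Acnt (w :: [1]) N = _
        rw [Acnt_cons]
        simp [Acnt_one]
      have hwpos : (0:ℝ) < w := by linarith
      have h1 : (w:ℝ) * ((N/w : ℕ):ℝ) ≤ N := by
        exact_mod_cast Nat.mul_div_le N w
      have h2 : (N:ℝ) < (w:ℝ) * (((N/w : ℕ):ℝ) + 1) := by
        exact_mod_cast wT_lt N w hw
      have key : |((N/w : ℕ):ℝ) + 1 - (N:ℝ)/(w:ℝ)| ≤ 2 := by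
        have ha : (N:ℝ)/(w:ℝ) < ((N/w : ℕ):ℝ) + 1 := by
          rw [div_lt_iff₀ hwpos]; nlinarith
        have hb : ((N/w : ℕ):ℝ) ≤ (N:ℝ)/(w:ℝ) := by
          rw [le_div_iff₀ hwpos]; nlinarith
        rw [abs_le]; constructor <;> linarith
      have hgoal : (N:ℝ)^([w].length) / ((Nat.factorial [w].length : ℝ) * (([w].prod : ℕ):ℝ))
          = (N:ℝ)/(w:ℝ) := by
        simp [Nat.factorial_one]
      rw [hA, hgoal]
      have hexp : ([w].length - 1) = 0 := by simp
      rw [hexp, pow_zero, mul_one]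
      push_cast
      simpa using key
    · -- ws' nonempty, e ≥ 1
      obtain ⟨C', hC'pos, hC'⟩ := ih hws'
      set e := ws'.length with he
      have he1 : 1 ≤ e := by
        cases ws' with
        | nil => exact absurd rfl hemp
        | cons a t => simp [he]
      set Q : ℝ := (Nat.factorial e : ℝ) * (ws'.prod : ℝ) with hQ
      have hQ1 : (1:ℝ) ≤ Q := by
        have h1 : 1 ≤ Nat.factorial e := Nat.one_le_iff_ne_zero.2 (Nat.factorial_ne_zero e)
        have h2 : 1 ≤ ws'.prod := List.one_le_prod_of_one_le (by exact_mod_cast hws')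
        have h1' : (1:ℝ) ≤ (Nat.factorial e : ℝ) := by exact_mod_cast h1
        have h2' : (1:ℝ) ≤ (ws'.prod : ℝ) := by exact_mod_cast h2
        rw [hQ]; nlinarith
      have hQpos : (0:ℝ) < Q := by linarith
      refine ⟨2 * (C' + 1) + 1, by positivity, fun N hN => ?_⟩
      have hNR : (1:ℝ) ≤ (N:ℝ) := by exact_mod_cast hN
      set T := N / w with hT
      have hA : (Acnt ((w :: ws') ++ [1]) N : ℝ)
          = ∑ t ∈ Finset.range (T + 1), (Acnt (ws' ++ [1]) (N - w*t) : ℝ) := by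
        rw [List.cons_append, Acnt_cons]
        push_cast
        rfl
      set S : ℝ := ∑ t ∈ Finset.range (T + 1), ((N - w*t : ℕ):ℝ)^e with hS
      have hsum := sum_pow_bounds N w e hw
      rw [← hT, ← hS] at hsum
      have hlen : (w :: ws').length = e + 1 := by simp [he]
      rw [hlen]
      have hfac : (Nat.factorial (e+1) : ℝ) = ((e:ℝ)+1) * (Nat.factorial e : ℝ) := by
        rw [Nat.factorial_succ]; push_cast; ring
      have hprod : ((w :: ws').prod : ℝ) = (w:ℝ) * (ws'.prod : ℝ) := by push_cast; simp
      have hew : (0:ℝ) < ((e:ℝ)+1) * (w:ℝ) := by positivity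
      set M : ℝ := (N:ℝ)^(e+1) / (((e:ℝ)+1) * (w:ℝ)) with hM
      -- first piece : |A - S/Q| ≤ 2(C'+1) N^e
      have hone_pow : (1:ℝ) ≤ (N:ℝ)^(e-1) := by
        have := pow_le_pow_left₀ (by norm_num : (0:ℝ) ≤ 1) hNR (e-1)
        simpa using this
      have hfirst : |(Acnt ((w :: ws') ++ [1]) N : ℝ) - S / Q| ≤ 2*(C'+1) * (N:ℝ)^e := by
        rw [hA, hS, Finset.sum_div, ← Finset.sum_sub_distrib]
        calc |∑ t ∈ Finset.range (T+1),
                ((Acnt (ws' ++ [1]) (N - w*t) : ℝ) - ((N - w*t : ℕ):ℝ)^e / Q)|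
            ≤ ∑ t ∈ Finset.range (T+1),
                |(Acnt (ws' ++ [1]) (N - w*t) : ℝ) - ((N - w*t : ℕ):ℝ)^e / Q| :=
              Finset.abs_sum_le_sum_abs _ _
          _ ≤ ∑ _t ∈ Finset.range (T+1), (C'+1) * (N:ℝ)^(e-1) := by
              refine Finset.sum_le_sum fun t _ => ?_
              rcases Nat.eq_zero_or_pos (N - w*t) with hx | hx
              · rw [hx]
                have hz : ((0:ℕ):ℝ)^e = 0 := by
                  rw [Nat.cast_zero, zero_pow (by omega : e ≠ 0)]
                rw [Acnt_zero, hz, zero_div, Nat.cast_one, sub_zero, abs_one]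
                nlinarith
              · have hb := hC' (N - w*t) hx
                have hxN : ((N - w*t : ℕ):ℝ) ≤ (N:ℝ) := by
                  exact_mod_cast Nat.sub_le N (w*t)
                have hx0 : (0:ℝ) ≤ ((N - w*t : ℕ):ℝ) := Nat.cast_nonneg _
                calc |(Acnt (ws' ++ [1]) (N - w*t) : ℝ) - ((N - w*t : ℕ):ℝ)^e / Q|
                    ≤ C' * ((N - w*t : ℕ):ℝ)^(e-1) := by rw [hQ]; exact hb
                  _ ≤ C' * (N:ℝ)^(e-1) := by
                      have := pow_le_pow_left₀ hx0 hxN (e-1)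
                      nlinarith
                  _ ≤ (C'+1) * (N:ℝ)^(e-1) := by
                      have : (0:ℝ) ≤ (N:ℝ)^(e-1) := by positivity
                      nlinarith
          _ = ((T:ℝ)+1) * ((C'+1) * (N:ℝ)^(e-1)) := by
              rw [Finset.sum_const, Finset.card_range]; push_cast; ring
          _ ≤ 2*(C'+1) * (N:ℝ)^e := by
              have hTN : (T:ℝ) ≤ (N:ℝ) := by
                exact_mod_cast Nat.div_le_self N w
              have hpow : (N:ℝ)^(e-1) * (N:ℝ) = (N:ℝ)^e := by
                rw [← pow_succ]
                congr 1
                omega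
              have h2 : (0:ℝ) ≤ (N:ℝ)^(e-1) := by positivity
              have hcc : (0:ℝ) ≤ (C'+1) * (N:ℝ)^(e-1) := mul_nonneg (by linarith) h2
              calc ((T:ℝ)+1) * ((C'+1) * (N:ℝ)^(e-1))
                  ≤ 2 * (N:ℝ) * ((C'+1) * (N:ℝ)^(e-1)) := by
                    nlinarith [mul_nonneg (by linarith : (0:ℝ) ≤ 2*(N:ℝ) - ((T:ℝ)+1)) hcc]
                _ = 2*(C'+1) * ((N:ℝ)^(e-1) * (N:ℝ)) := by ring
                _ = 2*(C'+1) * (N:ℝ)^e := by rw [hpow]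
      -- second piece
      have hSM : |S - M| ≤ (N:ℝ)^e := by
        have hSlb : M ≤ S := by
          rw [hM, div_le_iff₀ hew]
          linarith [hsum.1]
        have hSub : S ≤ M + (N:ℝ)^e := by
          have h2 := hsum.2
          have : S ≤ ((N:ℝ)^(e+1) + ((e:ℝ)+1) * w * (N:ℝ)^e) / (((e:ℝ)+1) * (w:ℝ)) := by
            rw [le_div_iff₀ hew]
            nlinarith
          calc S ≤ ((N:ℝ)^(e+1) + ((e:ℝ)+1) * w * (N:ℝ)^e) / (((e:ℝ)+1) * (w:ℝ)) := this
            _ = M + (N:ℝ)^e := by rw [hM]; field_simp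
        rw [abs_le]
        constructor <;> linarith
      have hsecond : |S / Q -
          (N:ℝ)^(e+1) / ((Nat.factorial (e+1) : ℝ) * (((w :: ws').prod : ℝ)))|
          ≤ (N:ℝ)^e := by
        have hd : (N:ℝ)^(e+1) / ((Nat.factorial (e+1) : ℝ) * (((w :: ws').prod : ℝ)))
            = M / Q := by
          rw [hM, hfac, hprod, hQ]
          field_simp
        rw [hd, div_sub_div_same, abs_div, abs_of_pos hQpos]
        have hdd : |S - M| / Q ≤ |S - M| := by
          rw [div_le_iff₀ hQpos]
          nlinarith [abs_nonneg (S - M)]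
        linarith [hSM, hdd]
      calc |(Acnt ((w :: ws') ++ [1]) N : ℝ) -
              (N:ℝ)^(e+1) / ((Nat.factorial (e+1) : ℝ) * (((w :: ws').prod : ℝ)))|
          ≤ |(Acnt ((w :: ws') ++ [1]) N : ℝ) - S / Q| +
            |S / Q - (N:ℝ)^(e+1) / ((Nat.factorial (e+1) : ℝ) * (((w :: ws').prod : ℝ)))| :=
            abs_sub_le _ _ _
        _ ≤ 2*(C'+1) * (N:ℝ)^e + (N:ℝ)^e := add_le_add hfirst hsecond
        _ = (2*(C'+1) + 1) * (N:ℝ)^e := by ring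
        _ ≤ (2*(C'+1) + 1) * (N:ℝ)^((e+1) - 1) := by
            simp



def msetOf : List (ℕ×ℕ) → List ℕ → Multiset (ℕ×ℕ)
  | [], _ => 0
  | _ :: _, [] => 0
  | p :: ps, t :: v => Multiset.replicate t p + msetOf ps v

lemma mem_msetOf {ps : List (ℕ×ℕ)} {v : List ℕ} {b : ℕ×ℕ} (hb : b ∈ msetOf ps v) :
    b ∈ ps := by
  induction ps generalizing v with
  | nil => simp [msetOf] at hb
  | cons p ps ih =>
    cases v with
    | nil => simp [msetOf] at hb
    | cons t v =>
      simp only [msetOf, Multiset.mem_add, Multiset.eq_of_mem_replicate] at hb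
      rcases hb with hb | hb
      · simp [Multiset.eq_of_mem_replicate hb]
      · simp [ih hb]

lemma count_msetOf_of_not_mem {ps : List (ℕ×ℕ)} {v : List ℕ} {q : ℕ×ℕ} (hq : q ∉ ps) :
    (msetOf ps v).count q = 0 :=
  Multiset.count_eq_zero.2 (fun h => hq (mem_msetOf h))

lemma sum_map_msetOf (f : ℕ×ℕ → ℕ) : ∀ (ps : List (ℕ×ℕ)) (v : List ℕ),
    ((msetOf ps v).map f).sum = dotL (ps.map f) v := by
  intro ps
  induction ps with
  | nil => intro v; simp [msetOf, dotL]
  | cons p ps ih =>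
    intro v
    cases v with
    | nil => simp [msetOf, dotL]
    | cons t v =>
      simp only [msetOf, Multiset.map_add, Multiset.sum_add, Multiset.map_replicate,
        Multiset.sum_replicate, smul_eq_mul, List.map_cons, dotL, List.zipWith_cons_cons,
        List.sum_cons]
      rw [ih v]
      rw [dotL]
      ring

lemma msetOf_inj {ps : List (ℕ×ℕ)} (hnd : ps.Nodup) : ∀ {v w : List ℕ},
    v.length = ps.length → w.length = ps.length → msetOf ps v = msetOf ps w → v = w := by
  induction ps with
  | nil =>
    intro v w hv hw _
    cases v <;> cases w <;> simp_all
  | cons p ps ih =>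
    intro v w hv hw heq
    cases v with
    | nil => simp at hv
    | cons t v' =>
      cases w with
      | nil => simp at hw
      | cons s w' =>
        have hpnot : p ∉ ps := (List.nodup_cons.1 hnd).1
        have hnd' : ps.Nodup := (List.nodup_cons.1 hnd).2
        have hcount := congrArg (Multiset.count p) heq
        simp only [msetOf, Multiset.count_add, Multiset.count_replicate, if_pos rfl,
          count_msetOf_of_not_mem hpnot] at hcount
        have hts : t = s := by simpa using hcount
        subst hts
        have : msetOf ps v' = msetOf ps w' := by
          have := heq
          simp only [msetOf] at this
          exact add_left_cancel this
        have := ih hnd' (by simpa using hv) (by simpa using hw) this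
        rw [this]

lemma msetOf_map_congr {ps : List (ℕ×ℕ)} {f g : ℕ×ℕ → ℕ}
    (h : ∀ q ∈ ps, f q = g q) : msetOf ps (ps.map f) = msetOf ps (ps.map g) := by
  rw [List.map_congr_left h]

lemma msetOf_counts {ps : List (ℕ×ℕ)} (hnd : ps.Nodup) : ∀ {M : Multiset (ℕ×ℕ)},
    (∀ b ∈ M, b ∈ ps) → msetOf ps (ps.map (fun p => M.count p)) = M := by
  induction ps with
  | nil =>
    intro M hM
    have : M = 0 := Multiset.eq_zero_of_forall_notMem (fun b hb => by simpa using hM b hb)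
    simp [this, msetOf]
  | cons p ps ih =>
    intro M hM
    have hpnot : p ∉ ps := (List.nodup_cons.1 hnd).1
    have hnd' : ps.Nodup := (List.nodup_cons.1 hnd).2
    set M' := M.filter (· ≠ p) with hM'
    have hsplit : M.filter (· = p) + M' = M := Multiset.filter_add_not _ M
    have hrep : M.filter (· = p) = Multiset.replicate (M.count p) p :=
      Multiset.filter_eq' M p
    have hM'mem : ∀ b ∈ M', b ∈ ps := by
      intro b hb
      have hbM : b ∈ M := Multiset.mem_of_mem_filter hb
      have hbne : b ≠ p := (Multiset.mem_filter.1 hb).2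
      have := hM b hbM
      simp only [List.mem_cons] at this
      tauto
    have hcongr : msetOf ps (ps.map (fun q => M.count q))
        = msetOf ps (ps.map (fun q => M'.count q)) := by
      apply msetOf_map_congr
      intro q hq
      have hqp : q ≠ p := fun h => hpnot (h ▸ hq)
      rw [hM']
      exact (Multiset.count_filter_of_pos (p := fun x => x ≠ p) hqp).symm
    show Multiset.replicate (M.count p) p + msetOf ps (ps.map (fun q => M.count q)) = M
    rw [hcongr, ih hnd' hM'mem, ← hrep, hsplit]


def PSl (k l : ℕ) : List (ℕ×ℕ) :=
  ((List.range (k-1)).map (fun i => (1, i+2))) ++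
    (((List.range (l-1)).map (fun j => (2, j+2))) ++ [(1,1)])

def ws0 (k l : ℕ) : List ℕ :=
  ((List.range (k-1)).map (fun i => i+2)) ++ ((List.range (l-1)).map (fun j => 2*(j+2)))

lemma WS_eq (k l : ℕ) : (PSl k l).map (fun p => p.1*p.2) = ws0 k l ++ [1] := by
  simp [PSl, ws0, List.map_append, List.map_map, Function.comp_def]

lemma ws0_ge1 (k l : ℕ) : ∀ w ∈ ws0 k l, 1 ≤ w := by
  intro w hw
  simp only [ws0, List.mem_append, List.mem_map, List.mem_range] at hw
  rcases hw with ⟨i, _, rfl⟩ | ⟨j, _, rfl⟩ <;> omega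

lemma ws0_len (k l : ℕ) : (ws0 k l).length = (k-1) + (l-1) := by simp [ws0]

lemma prodA : ∀ m : ℕ, ((List.range m).map (fun i => i+2)).prod = Nat.factorial (m+1)
  | 0 => by simp
  | m+1 => by
    rw [List.range_succ, List.map_append, List.prod_append, prodA m]
    simp [Nat.factorial_succ]
    ring

lemma prodB : ∀ m : ℕ, ((List.range m).map (fun j => 2*(j+2))).prod
    = 2^m * Nat.factorial (m+1)
  | 0 => by simp
  | m+1 => by
    rw [List.range_succ, List.map_append, List.prod_append, prodB m]
    simp [Nat.factorial_succ, pow_succ]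
    ring

lemma ws0_prod (k l : ℕ) (hk : 1 ≤ k) (hl : 1 ≤ l) :
    (ws0 k l).prod = Nat.factorial k * (2^(l-1) * Nat.factorial l) := by
  rw [ws0, List.prod_append, prodA, prodB,
    (by omega : k - 1 + 1 = k), (by omega : l - 1 + 1 = l)]

lemma PS_nodup (k l : ℕ) : (PSl k l).Nodup := by
  rw [PSl]
  rw [List.nodup_append, List.nodup_append]
  refine ⟨?_, ⟨?_, ?_, ?_⟩, ?_⟩
  · exact List.nodup_range.map (fun a b h => by simpa using h)
  · exact List.nodup_range.map (fun a b h => by simpa using h)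
  · simp
  · intro x hx y hy hxy
    subst hxy
    simp only [List.mem_map, List.mem_range] at hx
    obtain ⟨j, _, rfl⟩ := hx
    simp at hy
  · intro x hx y hy hxy
    subst hxy
    simp only [List.mem_map, List.mem_range] at hx
    obtain ⟨i, hik, rfl⟩ := hx
    simp only [List.mem_append, List.mem_map, List.mem_range, List.mem_singleton] at hy
    rcases hy with ⟨j, _, hj⟩ | hj <;> simp at hj

lemma mem_PSl {k l : ℕ} (hk : 1 ≤ k) (hl : 1 ≤ l) {b : ℕ×ℕ} :
    b ∈ PSl k l ↔ ((b.1 = 1 ∧ 1 ≤ b.2 ∧ b.2 ≤ k) ∨ (b.1 = 2 ∧ 2 ≤ b.2 ∧ b.2 ≤ l)) := by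
  obtain ⟨x, y⟩ := b
  simp only [PSl, List.mem_append, List.mem_map, List.mem_range, List.mem_singleton,
    Prod.mk.injEq]
  constructor
  · rintro (⟨i, hi, h1, h2⟩ | ⟨j, hj, h1, h2⟩ | ⟨h1, h2⟩) <;> simp_all <;> omega
  · rintro (⟨rfl, h2, h3⟩ | ⟨rfl, h2, h3⟩)
    · rcases Nat.lt_or_ge y 2 with hy | hy
      · right; right
        constructor <;> omega
      · left
        exact ⟨y - 2, by omega, rfl, by omega⟩
    · right; left
      exact ⟨y - 2, by omega, rfl, by omega⟩

lemma split_bounded (k : ℕ) (W : Multiset ℕ) (hW : ∀ x ∈ W, x ≤ k) :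
    ∃ A B : Multiset ℕ, A + B = W ∧ B.sum ≤ A.sum ∧ A.sum - B.sum ≤ k := by
  induction W using Multiset.induction_on with
  | empty => exact ⟨0, 0, by simp, by simp, by simp⟩
  | cons a s ih =>
    obtain ⟨A, B, hAB, hle, hd⟩ := ih (fun x hx => hW x (Multiset.mem_cons_of_mem hx))
    have ha : a ≤ k := hW a (Multiset.mem_cons_self a s)
    rcases le_or_gt (B.sum + a) A.sum with hc | hc
    · refine ⟨A, a ::ₘ B, ?_, ?_, ?_⟩
      · rw [← hAB, add_comm A (a ::ₘ B), Multiset.cons_add, add_comm B A]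
      · simp [Multiset.sum_cons]; omega
      · simp [Multiset.sum_cons]; omega
    · refine ⟨a ::ₘ B, A, ?_, ?_, ?_⟩
      · rw [← hAB, Multiset.cons_add, add_comm B A]
      · simp [Multiset.sum_cons]; omega
      · simp [Multiset.sum_cons]; omega

lemma split_even (k : ℕ) (hk : 1 ≤ k) (W : Multiset ℕ) (hub : ∀ x ∈ W, x ≤ k)
    (hones : k ≤ W.count 1) (heven : 2 ∣ W.sum) :
    ∃ A B : Multiset ℕ, A + B = W ∧ A.sum = B.sum := by
  classical
  set W' := W.filter (· ≠ 1) with hW'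
  have hsplit : W.filter (· = 1) + W' = W := Multiset.filter_add_not _ W
  have hrep : W.filter (· = 1) = Multiset.replicate (W.count 1) 1 := Multiset.filter_eq' W 1
  obtain ⟨A', B', hAB', hle, hd⟩ := split_bounded k W'
    (fun x hx => hub x (Multiset.mem_of_mem_filter hx))
  set m := W.count 1 with hm
  have hsum : A'.sum + B'.sum + m = W.sum := by
    have h1 := congrArg Multiset.sum hsplit
    rw [Multiset.sum_add, hrep, Multiset.sum_replicate] at h1
    have h2 := congrArg Multiset.sum hAB'
    rw [Multiset.sum_add] at h2
    simp only [smul_eq_mul, mul_one] at h1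
    omega
  have hdk : A'.sum - B'.sum ≤ m := le_trans hd hones
  obtain ⟨c, hc⟩ : ∃ c, m = 2*c + (A'.sum - B'.sum) := by
    refine ⟨(m - (A'.sum - B'.sum))/2, ?_⟩
    omega
  refine ⟨A' + Multiset.replicate c 1, B' + Multiset.replicate (c + (A'.sum - B'.sum)) 1,
    ?_, ?_⟩
  · have : (Multiset.replicate c 1 + Multiset.replicate (c + (A'.sum - B'.sum)) 1)
        = Multiset.replicate m 1 := by
      rw [← Multiset.replicate_add]
      congr 1
      omega
    calc A' + Multiset.replicate c 1 + (B' + Multiset.replicate (c + (A'.sum - B'.sum)) 1)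
        = (A' + B') + (Multiset.replicate c 1 + Multiset.replicate (c + (A'.sum - B'.sum)) 1) :=
          add_add_add_comm _ _ _ _
      _ = W' + Multiset.replicate m 1 := by rw [this, hAB']
      _ = W := by rw [← hsplit, hrep, add_comm]
  · simp [Multiset.sum_add, Multiset.sum_replicate]
    omega

def rowRects (x₁ x₂ : ℕ) : ℕ → List ℕ → List Rect
  | _, [] => []
  | o, w :: L => (x₁, x₂, o, o + w) :: rowRects x₁ x₂ (o + w) L

lemma rowRects_mem {x₁ x₂ : ℕ} : ∀ {o : ℕ} {L : List ℕ}, (∀ w ∈ L, 1 ≤ w) →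
    ∀ R ∈ rowRects x₁ x₂ o L,
      R.1 = x₁ ∧ R.2.1 = x₂ ∧ o ≤ R.2.2.1 ∧ R.2.2.1 < R.2.2.2 ∧ R.2.2.2 ≤ o + L.sum := by
  intro o L
  induction L generalizing o with
  | nil => intro _ R hR; simp [rowRects] at hR
  | cons w L ih =>
    intro hL R hR
    simp only [rowRects, List.mem_cons] at hR
    rcases hR with rfl | hR
    · have hw : 1 ≤ w := hL w (by simp)
      exact ⟨rfl, rfl, le_refl _, by simp; omega, by simp only [List.sum_cons]; omega⟩
    · obtain ⟨h1, h2, h3, h4, h5⟩ := ih (fun x hx => hL x (by simp [hx])) R hR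
      exact ⟨h1, h2, by omega, h4, by simp only [List.sum_cons]; omega⟩

lemma rowRects_cover {x₁ x₂ : ℕ} : ∀ {o : ℕ} {L : List ℕ}, (∀ w ∈ L, 1 ≤ w) →
    ∀ {j : ℕ}, o ≤ j → j < o + L.sum →
      ∃! R, R ∈ rowRects x₁ x₂ o L ∧ R.2.2.1 ≤ j ∧ j < R.2.2.2 := by
  intro o L
  induction L generalizing o with
  | nil => intro _ j h1 h2; simp at h2; omega
  | cons w L ih =>
    intro hL j h1 h2
    have hL' : ∀ x ∈ L, 1 ≤ x := fun x hx => hL x (by simp [hx])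
    rcases lt_or_ge j (o + w) with hj | hj
    · refine ⟨(x₁, x₂, o, o + w), ⟨by simp [rowRects], h1, hj⟩, ?_⟩
      rintro R ⟨hR, hRj1, hRj2⟩
      simp only [rowRects, List.mem_cons] at hR
      rcases hR with rfl | hR
      · rfl
      · obtain ⟨_, _, h3, _, _⟩ := rowRects_mem hL' R hR
        omega
    · have h2' : j < (o + w) + L.sum := by simp only [List.sum_cons] at h2; omega
      obtain ⟨R₀, ⟨hR₀m, hR₀c⟩, hR₀u⟩ := ih hL' hj h2'
      refine ⟨R₀, ⟨by simp [rowRects, hR₀m], hR₀c⟩, ?_⟩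
      rintro R ⟨hR, hRj1, hRj2⟩
      simp only [rowRects, List.mem_cons] at hR
      rcases hR with rfl | hR
      · simp only at hRj2; omega
      · exact hR₀u R ⟨hR, hRj1, hRj2⟩

lemma rowRects_blocks {x₁ x₂ : ℕ} (hx : x₁ < x₂) : ∀ (o : ℕ) (L : List ℕ),
    (rowRects x₁ x₂ o L).map blockOf
      = L.map (fun w => (min (x₂ - x₁) w, max (x₂ - x₁) w)) := by
  intro o L
  induction L generalizing o with
  | nil => simp [rowRects]
  | cons w L ih =>
    simp only [rowRects, List.map_cons, ih]
    congr 1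
    simp [blockOf]

lemma rowRects_nodup {x₁ x₂ : ℕ} : ∀ {o : ℕ} {L : List ℕ}, (∀ w ∈ L, 1 ≤ w) →
    (rowRects x₁ x₂ o L).Nodup := by
  intro o L
  induction L generalizing o with
  | nil => intro _; simp [rowRects]
  | cons w L ih =>
    intro hL
    have hL' : ∀ x ∈ L, 1 ≤ x := fun x hx => hL x (by simp [hx])
    simp only [rowRects, List.nodup_cons]
    refine ⟨?_, ih hL'⟩
    intro hmem
    obtain ⟨_, _, h3, _, _⟩ := rowRects_mem hL' _ hmem
    simp only at h3
    have hw : 1 ≤ w := hL w (by simp)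
    omega

lemma tiling_exists (k l n : ℕ) (hk : 1 ≤ k) (hl : 1 ≤ l) (M : Multiset (ℕ×ℕ))
    (hmem : ∀ b ∈ M, b ∈ PSl k l) (harea : (M.map (fun b => b.1*b.2)).sum = 2*n)
    (hones : k ≤ M.count (1,1)) :
    ∃ T : Finset Rect, IsTiling 2 n T ∧ blocksOf T = M := by
  classical
  set W : Multiset ℕ := (M.filter (fun b => b.1 = 1)).map Prod.snd with hW
  set Cs : Multiset ℕ := (M.filter (fun b => ¬ b.1 = 1)).map Prod.snd with hCs
  -- basic facts about elements
  have hW_elt : ∀ x ∈ W, 1 ≤ x ∧ x ≤ k := by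
    intro x hx
    rw [hW] at hx
    obtain ⟨b, hb, rfl⟩ := Multiset.mem_map.1 hx
    have hb1 : b.1 = 1 := (Multiset.mem_filter.1 hb).2
    have := (mem_PSl hk hl).1 (hmem b (Multiset.mem_of_mem_filter hb))
    rcases this with ⟨_, h⟩ | ⟨h2, _⟩
    · exact h
    · omega
  have hCs_elt : ∀ x ∈ Cs, 2 ≤ x ∧ x ≤ l := by
    intro x hx
    rw [hCs] at hx
    obtain ⟨b, hb, rfl⟩ := Multiset.mem_map.1 hx
    have hb1 : ¬ b.1 = 1 := (Multiset.mem_filter.1 hb).2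
    have := (mem_PSl hk hl).1 (hmem b (Multiset.mem_of_mem_filter hb))
    rcases this with ⟨h1, _⟩ | ⟨_, h⟩
    · omega
    · exact h
  have hfst2 : ∀ b ∈ M.filter (fun b => ¬ b.1 = 1), b.1 = 2 := by
    intro b hb
    have hb1 : ¬ b.1 = 1 := (Multiset.mem_filter.1 hb).2
    have := (mem_PSl hk hl).1 (hmem b (Multiset.mem_of_mem_filter hb))
    omega
  -- area decomposition
  have hMsplit : M.filter (fun b => b.1 = 1) + M.filter (fun b => ¬ b.1 = 1) = M :=
    Multiset.filter_add_not _ M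
  have harea2 : W.sum + 2 * Cs.sum = 2 * n := by
    have h0 : ((M.filter (fun b => b.1 = 1)).map (fun b => b.1*b.2)).sum
        + ((M.filter (fun b => ¬ b.1 = 1)).map (fun b => b.1*b.2)).sum = 2*n := by
      rw [← Multiset.sum_add, ← Multiset.map_add, hMsplit, harea]
    have e1 : ((M.filter (fun b => b.1 = 1)).map (fun b => b.1*b.2)).sum = W.sum := by
      rw [hW]
      congr 1
      apply Multiset.map_congr rfl
      intro b hb
      have : b.1 = 1 := (Multiset.mem_filter.1 hb).2
      simp [this]
    have e2 : ((M.filter (fun b => ¬ b.1 = 1)).map (fun b => b.1*b.2)).sum = 2 * Cs.sum := by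
      rw [hCs]
      have : ((M.filter (fun b => ¬ b.1 = 1)).map (fun b => b.1*b.2))
          = ((M.filter (fun b => ¬ b.1 = 1)).map (fun b => 2 * b.2)) := by
        apply Multiset.map_congr rfl
        intro b hb
        rw [hfst2 b hb]
      rw [this, Multiset.sum_map_mul_left]
    omega
  -- count of ones
  have hcount1 : W.count 1 = M.count (1,1) := by
    rw [hW, Multiset.count_map, Multiset.filter_filter]
    rw [Multiset.count, Multiset.countP_eq_card_filter]
    congr 1
    apply Multiset.filter_congr
    rintro ⟨b1, b2⟩ _
    simp only [Prod.mk.injEq]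
    constructor
    · rintro ⟨h1, h2⟩; omega
    · rintro ⟨h1, h2⟩; omega
  have heven : 2 ∣ W.sum := ⟨n - Cs.sum, by omega⟩
  obtain ⟨Wa, Wb, hWab, hWsum⟩ := split_even k hk W (fun x hx => (hW_elt x hx).2)
    (by omega) heven
  have hWsums : Wa.sum + Wb.sum = W.sum := by rw [← hWab, Multiset.sum_add]
  have hsh : Wa.sum + Cs.sum = n := by omega
  set ch := Cs.sum with hch
  set la := Wa.toList with hla
  set lb := Wb.toList with hlb
  set lc := Cs.toList with hlc
  have hla_sum : la.sum = Wa.sum := Multiset.sum_toList Wa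
  have hlb_sum : lb.sum = Wb.sum := Multiset.sum_toList Wb
  have hlc_sum : lc.sum = Cs.sum := Multiset.sum_toList Cs
  have hla1 : ∀ w ∈ la, 1 ≤ w := fun w hw =>
    (hW_elt w (by rw [← hWab]; exact Multiset.mem_add.2 (Or.inl ((Multiset.mem_toList).1 hw)))).1
  have hlb1 : ∀ w ∈ lb, 1 ≤ w := fun w hw =>
    (hW_elt w (by rw [← hWab]; exact Multiset.mem_add.2 (Or.inr ((Multiset.mem_toList).1 hw)))).1
  have hlc2 : ∀ w ∈ lc, 2 ≤ w := fun w hw =>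
    (hCs_elt w ((Multiset.mem_toList).1 hw)).1
  have hlc1 : ∀ w ∈ lc, 1 ≤ w := fun w hw => le_trans (by norm_num) (hlc2 w hw)
  set TL : List Rect :=
    rowRects 0 2 0 lc ++ (rowRects 0 1 ch la ++ rowRects 1 2 ch lb) with hTL
  have hnd : TL.Nodup := by
    rw [hTL, List.nodup_append, List.nodup_append]
    refine ⟨rowRects_nodup hlc1, ⟨rowRects_nodup hla1, rowRects_nodup hlb1, ?_⟩, ?_⟩
    · intro R h1 R' h2 hRR
      subst hRR
      have e1 := (rowRects_mem hla1 R h1).1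
      have e2 := (rowRects_mem hlb1 R h2).1
      omega
    · intro R h1 R' h2 hRR
      subst hRR
      have e1 := (rowRects_mem hlc1 R h1).2.1
      rcases List.mem_append.1 h2 with h2 | h2
      · have e2 := (rowRects_mem hla1 R h2).2.1
        omega
      · have e2 := (rowRects_mem hlb1 R h2).1
        have e3 := (rowRects_mem hlc1 R h1).1
        omega
  set T : Finset Rect := TL.toFinset with hT
  have memT : ∀ R : Rect, R ∈ T ↔ R ∈ TL := fun R => List.mem_toFinset
  have hchn : ch ≤ n := by omega
  refine ⟨T, ⟨?_, ?_⟩, ?_⟩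
  · -- bounds
    intro R hR
    rw [memT, hTL] at hR
    rcases List.mem_append.1 hR with h | h
    · obtain ⟨e1, e2, e3, e4, e5⟩ := rowRects_mem hlc1 R h
      refine ⟨by omega, by omega, e4, by rw [hlc_sum] at e5; omega⟩
    · rcases List.mem_append.1 h with h | h
      · obtain ⟨e1, e2, e3, e4, e5⟩ := rowRects_mem hla1 R h
        refine ⟨by omega, by omega, e4, by rw [hla_sum] at e5; omega⟩
      · obtain ⟨e1, e2, e3, e4, e5⟩ := rowRects_mem hlb1 R h
        refine ⟨by omega, by omega, e4, by rw [hlb_sum] at e5; omega⟩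
  · -- exactly one
    intro i hi j hj
    by_cases hjc : j < ch
    · obtain ⟨R₀, ⟨hm, hc⟩, hu⟩ := rowRects_cover (x₁ := 0) (x₂ := 2) hlc1
        (Nat.zero_le j) (by rw [hlc_sum]; omega)
      obtain ⟨e1, e2, _, _, _⟩ := rowRects_mem hlc1 R₀ hm
      refine ⟨R₀, ⟨(memT R₀).2 (by rw [hTL]; exact List.mem_append.2 (Or.inl hm)),
        ⟨by omega, by omega, hc.1, hc.2⟩⟩, ?_⟩
      rintro R ⟨hRT, hcell⟩
      rw [memT, hTL] at hRT
      rcases List.mem_append.1 hRT with h | h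
      · exact hu R ⟨h, hcell.2.2⟩
      · rcases List.mem_append.1 h with h | h
        · have e3 := (rowRects_mem hla1 R h).2.2.1
          have := hcell.2.2.1
          omega
        · have e3 := (rowRects_mem hlb1 R h).2.2.1
          have := hcell.2.2.1
          omega
    · have hi01 : i = 0 ∨ i = 1 := by omega
      rcases hi01 with rfl | rfl
      · obtain ⟨R₀, ⟨hm, hc⟩, hu⟩ := rowRects_cover (x₁ := 0) (x₂ := 1) hla1
          (le_of_not_gt hjc) (by rw [hla_sum]; omega)
        obtain ⟨e1, e2, _, _, _⟩ := rowRects_mem hla1 R₀ hm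
        refine ⟨R₀, ⟨(memT R₀).2 (by
            rw [hTL]
            exact List.mem_append.2 (Or.inr (List.mem_append.2 (Or.inl hm)))),
          ⟨by omega, by omega, hc.1, hc.2⟩⟩, ?_⟩
        rintro R ⟨hRT, hcell⟩
        rw [memT, hTL] at hRT
        rcases List.mem_append.1 hRT with h | h
        · obtain ⟨_, _, _, _, e5⟩ := rowRects_mem hlc1 R h
          rw [hlc_sum] at e5
          have := hcell.2.2.2
          omega
        · rcases List.mem_append.1 h with h | h
          · exact hu R ⟨h, hcell.2.2⟩
          · have e1' := (rowRects_mem hlb1 R h).1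
            have := hcell.1
            omega
      · obtain ⟨R₀, ⟨hm, hc⟩, hu⟩ := rowRects_cover (x₁ := 1) (x₂ := 2) hlb1
          (le_of_not_gt hjc) (by rw [hlb_sum]; omega)
        obtain ⟨e1, e2, _, _, _⟩ := rowRects_mem hlb1 R₀ hm
        refine ⟨R₀, ⟨(memT R₀).2 (by
            rw [hTL]
            exact List.mem_append.2 (Or.inr (List.mem_append.2 (Or.inr hm)))),
          ⟨by omega, by omega, hc.1, hc.2⟩⟩, ?_⟩
        rintro R ⟨hRT, hcell⟩
        rw [memT, hTL] at hRT
        rcases List.mem_append.1 hRT with h | h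
        · obtain ⟨_, _, _, _, e5⟩ := rowRects_mem hlc1 R h
          rw [hlc_sum] at e5
          have := hcell.2.2.2
          omega
        · rcases List.mem_append.1 h with h | h
          · have e2' := (rowRects_mem hla1 R h).2.1
            have := hcell.2.1
            omega
          · exact hu R ⟨h, hcell.2.2⟩
  · -- blocks multiset
    have hval : T.val = (TL : Multiset Rect) := by
      rw [hT, List.toFinset_val, List.dedup_eq_self.2 hnd]
    rw [blocksOf, hval]
    rw [show ((TL : Multiset Rect).map blockOf) = ((TL.map blockOf : List (ℕ×ℕ)) : Multiset (ℕ×ℕ)) from rfl]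
    rw [hTL]
    rw [List.map_append, List.map_append]
    rw [rowRects_blocks (by norm_num) 0 lc, rowRects_blocks (by norm_num) ch la,
      rowRects_blocks (by norm_num) ch lb]
    have hcoe : ∀ (u v : List (ℕ×ℕ)), ((u ++ v : List (ℕ×ℕ)) : Multiset (ℕ×ℕ)) = (u : Multiset (ℕ×ℕ)) + v := fun u v => by
      exact_mod_cast (Multiset.coe_add u v).symm
    rw [hcoe, hcoe]
    have hmapc : ∀ (Z : Multiset ℕ) (f : ℕ → ℕ×ℕ), ((Z.toList.map f : List (ℕ×ℕ)) : Multiset (ℕ×ℕ)) = Z.map f := by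
      intro Z f
      conv_rhs => rw [← Multiset.coe_toList Z]
      rfl
    rw [hmapc Cs, hmapc Wa, hmapc Wb]
    have eCs : Cs.map (fun w => ((min (2-0) w, max (2-0) w) : ℕ×ℕ))
        = M.filter (fun b => ¬ b.1 = 1) := by
      rw [hCs, Multiset.map_map]
      have hcg : ∀ b ∈ M.filter (fun b => ¬ b.1 = 1),
          ((fun w => ((min (2-0) w, max (2-0) w) : ℕ×ℕ)) ∘ Prod.snd) b = id b := by
        intro b hb
        have h2 : b.1 = 2 := hfst2 b hb
        have hb2 : 2 ≤ b.2 := by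
          rcases (mem_PSl hk hl).1 (hmem b (Multiset.mem_of_mem_filter hb)) with
            ⟨h1, _⟩ | ⟨_, h⟩
          · omega
          · exact h.1
        have : ((min (2-0) b.2, max (2-0) b.2) : ℕ×ℕ) = (b.1, b.2) := by
          rw [h2]
          simp only [Prod.mk.injEq]
          omega
        simpa [Function.comp] using this
      rw [Multiset.map_congr rfl hcg, Multiset.map_id]
    have eWa : Wa.map (fun w => ((min (1-0) w, max (1-0) w) : ℕ×ℕ))
        = Wa.map (fun w => ((1, w) : ℕ×ℕ)) := by
      apply Multiset.map_congr rfl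
      intro w hw
      have h1 : 1 ≤ w := (hW_elt w (by
        rw [← hWab]; exact Multiset.mem_add.2 (Or.inl hw))).1
      simp only [Prod.mk.injEq]
      omega
    have eWb : Wb.map (fun w => ((min (2-1) w, max (2-1) w) : ℕ×ℕ))
        = Wb.map (fun w => ((1, w) : ℕ×ℕ)) := by
      apply Multiset.map_congr rfl
      intro w hw
      have h1 : 1 ≤ w := (hW_elt w (by
        rw [← hWab]; exact Multiset.mem_add.2 (Or.inr hw))).1
      simp only [Prod.mk.injEq]
      omega
    have eW : W.map (fun w => ((1, w) : ℕ×ℕ)) = M.filter (fun b => b.1 = 1) := by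
      rw [hW, Multiset.map_map]
      have hcg : ∀ b ∈ M.filter (fun b => b.1 = 1),
          ((fun w => ((1, w) : ℕ×ℕ)) ∘ Prod.snd) b = id b := by
        intro b hb
        have h1 : b.1 = 1 := (Multiset.mem_filter.1 hb).2
        have : ((1, b.2) : ℕ×ℕ) = (b.1, b.2) := by rw [h1]
        simpa [Function.comp] using this
      rw [Multiset.map_congr rfl hcg, Multiset.map_id]
    rw [eCs, eWa, eWb, ← Multiset.map_add, hWab, eW, add_comm]
    exact hMsplit


def cellsOf (R : Rect) : Finset (ℕ × ℕ) :=
  (Finset.Ico R.1 R.2.1) ×ˢ (Finset.Ico R.2.2.1 R.2.2.2)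

lemma mem_cellsOf {R : Rect} {i j : ℕ} : (i, j) ∈ cellsOf R ↔ cellIn R i j := by
  simp [cellsOf, cellIn, Finset.mem_product, Finset.mem_Ico, and_assoc]

lemma tiling_area {n : ℕ} {T : Finset Rect} (hT : IsTiling 2 n T) :
    ((blocksOf T).map (fun b => b.1 * b.2)).sum = 2 * n := by
  classical
  have hcover : (Finset.range 2) ×ˢ (Finset.range n) = T.biUnion cellsOf := by
    ext ⟨i, j⟩
    simp only [Finset.mem_product, Finset.mem_range, Finset.mem_biUnion]
    constructor
    · rintro ⟨hi, hj⟩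
      obtain ⟨R, ⟨hm, hc⟩, _⟩ := hT.2 i hi j hj
      exact ⟨R, hm, mem_cellsOf.2 hc⟩
    · rintro ⟨R, hm, hc⟩
      rw [mem_cellsOf] at hc
      obtain ⟨hc1, hc2, hc3, hc4⟩ := hc
      obtain ⟨_, h2, _, h4⟩ := hT.1 R hm
      exact ⟨by omega, by omega⟩
  have hdisj : ∀ R₁ ∈ T, ∀ R₂ ∈ T, R₁ ≠ R₂ → Disjoint (cellsOf R₁) (cellsOf R₂) := by
    intro R₁ h₁ R₂ h₂ hne
    rw [Finset.disjoint_left]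
    rintro ⟨i, j⟩ hc₁ hc₂
    rw [mem_cellsOf] at hc₁ hc₂
    obtain ⟨ha1, ha2, ha3, ha4⟩ := id hc₁
    obtain ⟨_, hb2, _, hb4⟩ := hT.1 R₁ h₁
    have hi : i < 2 := by omega
    have hj : j < n := by omega
    obtain ⟨R₀, _, hu⟩ := hT.2 i hi j hj
    exact hne ((hu R₁ ⟨h₁, hc₁⟩).trans (hu R₂ ⟨h₂, hc₂⟩).symm)
  have hcard : 2 * n = ∑ R ∈ T, (cellsOf R).card := by
    rw [← Finset.card_biUnion hdisj, ← hcover, Finset.card_product]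
    simp [Finset.card_range]
  have hcells : ∀ R : Rect, (cellsOf R).card = (R.2.1 - R.1) * (R.2.2.2 - R.2.2.1) := by
    intro R
    rw [cellsOf, Finset.card_product, Nat.card_Ico, Nat.card_Ico]
  have hblocks : ((blocksOf T).map (fun b => b.1 * b.2)).sum
      = ∑ R ∈ T, (R.2.1 - R.1) * (R.2.2.2 - R.2.2.1) := by
    rw [blocksOf, Multiset.map_map, Finset.sum_eq_multiset_sum]
    congr 1
    apply Multiset.map_congr rfl
    intro R _
    simp only [Function.comp_apply, blockOf]
    exact min_mul_max _ _
  rw [hblocks, hcard]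
  exact Finset.sum_congr rfl (fun R _ => (hcells R).symm)

lemma WSfull_ge1 (k l : ℕ) : ∀ w ∈ ws0 k l ++ [1], 1 ≤ w := by
  intro w hw
  rcases List.mem_append.1 hw with h | h
  · exact ws0_ge1 k l w h
  · simp at h; omega

lemma WSfull_len (k l : ℕ) : (ws0 k l ++ [1]).length = (PSl k l).length := by
  rw [← WS_eq, List.length_map]

lemma one_one_mem_PSl (k l : ℕ) : ((1,1) : ℕ×ℕ) ∈ PSl k l := by
  simp [PSl]

lemma pkl_bounds (k l n : ℕ) (hk : 1 ≤ k) (hl : 1 ≤ l) :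
    pkl k l n ≤ Acnt (ws0 k l ++ [1]) (2*n) ∧
      (k ≤ n → Acnt (ws0 k l ++ [1]) (2*n - k) ≤ pkl k l n) := by
  classical
  set ps := PSl k l with hps
  set S : Set (Multiset (ℕ×ℕ)) := {M : Multiset (ℕ × ℕ) |
    ∃ T : Finset Rect, IsTiling 2 n T ∧ blocksOf T = M ∧
      ∀ b ∈ M, ((b.1 = 1 ∧ 1 ≤ b.2 ∧ b.2 ≤ k) ∨ (b.1 = 2 ∧ 2 ≤ b.2 ∧ b.2 ≤ l))} with hS
  have hpkl : pkl k l n = Nat.card S := rfl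
  -- upper bound injection
  have hkey : ∀ M ∈ S, (ps.map (fun p => M.count p)) ∈ Sol (ws0 k l ++ [1]) (2*n)
      ∧ msetOf ps (ps.map (fun p => M.count p)) = M := by
    intro M hM
    obtain ⟨T, hT, hTM, hall⟩ := hM
    have hmemps : ∀ b ∈ M, b ∈ ps := fun b hb => (mem_PSl hk hl).2 (hall b hb)
    have hrecon : msetOf ps (ps.map (fun p => M.count p)) = M :=
      msetOf_counts (PS_nodup k l) hmemps
    have harea : (M.map (fun b => b.1 * b.2)).sum = 2*n := by
      rw [← hTM]; exact tiling_area hT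
    refine ⟨(mem_Sol_iff (WSfull_ge1 k l)).2 ⟨?_, ?_⟩, hrecon⟩
    · rw [List.length_map, WSfull_len]
    · rw [← WS_eq]
      rw [← sum_map_msetOf (fun p => p.1 * p.2) ps (ps.map (fun p => M.count p))]
      rw [hrecon, harea]
  have hinj : Function.Injective (fun (M : S) =>
      (⟨ps.map (fun p => (M : Multiset (ℕ×ℕ)).count p), (hkey M M.2).1⟩ :
        (Sol (ws0 k l ++ [1]) (2*n) : Finset (List ℕ)))) := by
    rintro ⟨M₁, h₁⟩ ⟨M₂, h₂⟩ heq
    simp only [Subtype.mk.injEq] at heq ⊢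
    have := (hkey M₁ h₁).2
    rw [← (hkey M₁ h₁).2, ← (hkey M₂ h₂).2, heq]
  have hfin : Finite S := Finite.of_injective _ hinj
  constructor
  · rw [hpkl]
    calc Nat.card S ≤ Nat.card (Sol (ws0 k l ++ [1]) (2*n) : Finset (List ℕ)) :=
          Nat.card_le_card_of_injective _ hinj
      _ = Acnt (ws0 k l ++ [1]) (2*n) := Nat.card_eq_finsetCard _
  · -- lower bound
    intro hkn
    have hkey2 : ∀ v ∈ Sol (ws0 k l ++ [1]) (2*n - k),
        (msetOf ps v + Multiset.replicate k ((1,1) : ℕ×ℕ)) ∈ S := by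
      intro v hv
      obtain ⟨hlen, hdot⟩ := (mem_Sol_iff (WSfull_ge1 k l)).1 hv
      set M : Multiset (ℕ×ℕ) := msetOf ps v + Multiset.replicate k ((1,1) : ℕ×ℕ) with hM
      have hmemps : ∀ b ∈ M, b ∈ ps := by
        intro b hb
        rcases Multiset.mem_add.1 hb with h | h
        · exact mem_msetOf h
        · rw [Multiset.eq_of_mem_replicate h]
          exact one_one_mem_PSl k l
      have harea : (M.map (fun b => b.1 * b.2)).sum = 2*n := by
        rw [hM, Multiset.map_add, Multiset.sum_add]
        rw [sum_map_msetOf (fun p => p.1 * p.2) ps v]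
        rw [Multiset.map_replicate, Multiset.sum_replicate]
        have h1 : dotL (ps.map (fun p => p.1 * p.2)) v = 2*n - k := by
          rw [WS_eq]; exact hdot
        rw [h1]
        simp only [smul_eq_mul]
        omega
      have hones : k ≤ M.count (1,1) := by
        rw [hM, Multiset.count_add, Multiset.count_replicate, if_pos rfl]
        omega
      obtain ⟨T, hT, hTM⟩ := tiling_exists k l n hk hl M hmemps harea hones
      exact ⟨T, hT, hTM, fun b hb => (mem_PSl hk hl).1 (hmemps b hb)⟩
    have hinj2 : Function.Injective
        (fun (v : (Sol (ws0 k l ++ [1]) (2*n - k) : Finset (List ℕ))) =>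
          (⟨msetOf ps (v : List ℕ) + Multiset.replicate k ((1,1) : ℕ×ℕ),
            hkey2 v v.2⟩ : S)) := by
      rintro ⟨v₁, h₁⟩ ⟨v₂, h₂⟩ heq
      simp only [Subtype.mk.injEq] at heq ⊢
      have hmeq : msetOf ps v₁ = msetOf ps v₂ := add_right_cancel heq
      have hl₁ := ((mem_Sol_iff (WSfull_ge1 k l)).1 h₁).1
      have hl₂ := ((mem_Sol_iff (WSfull_ge1 k l)).1 h₂).1
      rw [WSfull_len] at hl₁ hl₂
      exact msetOf_inj (PS_nodup k l) hl₁ hl₂ hmeq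
    rw [hpkl]
    calc Acnt (ws0 k l ++ [1]) (2*n - k)
        = Nat.card (Sol (ws0 k l ++ [1]) (2*n - k) : Finset (List ℕ)) :=
          (Nat.card_eq_finsetCard _).symm
      _ ≤ Nat.card S := Nat.card_le_card_of_injective _ hinj2

set_option maxHeartbeats 2000000 in
/-- `p_{k,l}(2,n) = 2^{k-1} n^{k+l-2} / (l!·k!·(k+l-2)!) + O(n^{k+l-3})`. -/
theorem pkl_asymptotic (k l : ℕ) (hk : 1 ≤ k) (hl : 1 ≤ l) :
    ∃ C : ℝ, 0 < C ∧ ∀ n : ℕ, 1 ≤ n →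
      |(pkl k l n : ℝ) -
          2 ^ (k - 1) * (n : ℝ) ^ (k + l - 2) /
            ((Nat.factorial l : ℝ) * Nat.factorial k * Nat.factorial (k + l - 2))| ≤
        C * (n : ℝ) ^ ((k : ℝ) + (l : ℝ) - 3) := by
  rcases Nat.lt_or_ge (k + l) 3 with hkl | hkl
  · -- k = l = 1
    have hk1 : k = 1 := by omega
    have hl1 : l = 1 := by omega
    subst hk1; subst hl1
    refine ⟨1, one_pos, fun n hn => ?_⟩
    have hws : ws0 1 1 = [] := by simp [ws0]
    have hb := pkl_bounds 1 1 n le_rfl le_rfl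
    rw [hws] at hb
    simp only [List.nil_append] at hb
    rw [Acnt_one, Acnt_one] at hb
    have hpkl1 : pkl 1 1 n = 1 := le_antisymm hb.1 (hb.2 hn)
    rw [hpkl1]
    have hnpos : (0:ℝ) < (n:ℝ) := by exact_mod_cast hn
    have hrp := Real.rpow_pos_of_pos hnpos ((1:ℝ) + (1:ℝ) - 3)
    have habs : |((1:ℕ):ℝ) - 2 ^ (1 - 1) * (n:ℝ) ^ (1 + 1 - 2) /
        ((Nat.factorial 1 : ℝ) * Nat.factorial 1 * Nat.factorial (1 + 1 - 2))| = 0 := by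
      norm_num [Nat.factorial]
    rw [habs]
    positivity
  · -- main case
    set d := k + l - 2 with hd
    have hd1 : 1 ≤ d := by omega
    have hlen : (ws0 k l).length = d := by rw [ws0_len]; omega
    obtain ⟨C₀, hC₀, hC⟩ := asymp (ws0 k l) (ws0_ge1 k l)
    rw [hlen] at hC
    set Pr : ℝ := ((ws0 k l).prod : ℝ) with hPr
    have hPrval : Pr = (Nat.factorial k : ℝ) * (2^(l-1) * (Nat.factorial l : ℝ)) := by
      rw [hPr, ws0_prod k l hk hl]
      push_cast
      ring
    have f1 : (1:ℝ) ≤ (Nat.factorial d : ℝ) := by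
      exact_mod_cast Nat.one_le_iff_ne_zero.2 (Nat.factorial_ne_zero d)
    have f2 : (1:ℝ) ≤ (Nat.factorial k : ℝ) := by
      exact_mod_cast Nat.one_le_iff_ne_zero.2 (Nat.factorial_ne_zero k)
    have f3 : (1:ℝ) ≤ (Nat.factorial l : ℝ) := by
      exact_mod_cast Nat.one_le_iff_ne_zero.2 (Nat.factorial_ne_zero l)
    have f4 : (1:ℝ) ≤ (2:ℝ)^(l-1) := one_le_pow₀ (by norm_num)
    have hPr1 : (1:ℝ) ≤ (Nat.factorial d : ℝ) * Pr := by
      rw [hPrval]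
      have g1 : (1:ℝ) ≤ 2^(l-1) * (Nat.factorial l : ℝ) := by nlinarith
      have g2 : (1:ℝ) ≤ (Nat.factorial k : ℝ) * (2^(l-1) * (Nat.factorial l : ℝ)) := by
        nlinarith
      nlinarith
    have hPrpos : (0:ℝ) < (Nat.factorial d : ℝ) * Pr := by linarith
    have hMain : ∀ m : ℕ, ((2*m : ℕ) : ℝ)^d / ((Nat.factorial d : ℝ) * Pr)
        = 2 ^ (k - 1) * (m : ℝ) ^ d /
          ((Nat.factorial l : ℝ) * Nat.factorial k * Nat.factorial d) := by
      intro m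
      have h2d : (2:ℝ)^d = 2^(k-1) * 2^(l-1) := by
        rw [← pow_add]; congr 1; omega
      rw [hPrval]
      push_cast
      rw [mul_pow, h2d]
      have u1 : (0:ℝ) < (Nat.factorial l : ℝ) := by linarith
      have u2 : (0:ℝ) < (Nat.factorial k : ℝ) := by linarith
      have u3 : (0:ℝ) < (Nat.factorial d : ℝ) := by linarith
      have u4 : (0:ℝ) < (2:ℝ)^(l-1) := by linarith
      field_simp
    set B : ℝ := ((3*k : ℕ):ℝ)^(d+1) + 2^(k-1) * (k:ℝ)^d with hB
    have hB0 : 0 ≤ B := by rw [hB]; positivity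
    set C₁ : ℝ := (C₀ + (d:ℝ)*(k:ℝ)) * 2^(d-1) with hC₁
    have hC₁pos : 0 < C₁ := by
      rw [hC₁]
      have : (0:ℝ) ≤ (d:ℝ)*(k:ℝ) := by positivity
      positivity
    refine ⟨C₁ + B + 1, by positivity, fun n hn => ?_⟩
    have hnR : (1:ℝ) ≤ (n:ℝ) := by exact_mod_cast hn
    have hrpow : (n : ℝ) ^ ((k : ℝ) + (l : ℝ) - 3) = (n:ℝ) ^ (d - 1 : ℕ) := by
      have h1 : ((k : ℝ) + (l : ℝ) - 3) = ((d - 1 : ℕ) : ℝ) := by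
        rw [show d - 1 = k + l - 3 by omega]
        rw [Nat.cast_sub (by omega : 3 ≤ k + l)]
        push_cast
        norm_num
      rw [h1, Real.rpow_natCast]
    rw [hrpow]
    have hpow1 : (1:ℝ) ≤ (n:ℝ)^(d-1 : ℕ) := one_le_pow₀ hnR
    have hpow0 : (0:ℝ) ≤ (n:ℝ)^(d-1 : ℕ) := by positivity
    have hgoal_main : 2 ^ (k - 1) * (n : ℝ) ^ (k + l - 2) /
        ((Nat.factorial l : ℝ) * Nat.factorial k * Nat.factorial (k + l - 2))
        = ((2*n : ℕ) : ℝ)^d / ((Nat.factorial d : ℝ) * Pr) := by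
      rw [hMain n, hd]
    rw [hgoal_main]
    have htri : ∀ a b : ℝ, 0 ≤ a → 0 ≤ b → |a - b| ≤ a + b := by
      intro a b ha hb
      rw [abs_le]
      constructor <;> linarith
    rcases Nat.lt_or_ge n k with hnk | hnk
    · -- small n
      have hub := (pkl_bounds k l n hk hl).1
      have hA := Acnt_le (ws0 k l ++ [1]) (2*n)
      rw [List.length_append, hlen] at hA
      simp only [List.length_cons, List.length_nil] at hA
      have hpklB : (pkl k l n : ℝ) ≤ ((3*k : ℕ):ℝ)^(d+1) := by
        have h1 : pkl k l n ≤ (2*n+1)^(d+1) := le_trans hub hA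
        have h2 : (2*n+1)^(d+1) ≤ (3*k)^(d+1) := Nat.pow_le_pow_left (by omega) _
        exact_mod_cast le_trans h1 h2
      have hden : (1:ℝ) ≤ (Nat.factorial l : ℝ) * Nat.factorial k * Nat.factorial d := by
        have g : (1:ℝ) ≤ (Nat.factorial l : ℝ) * Nat.factorial k := by nlinarith
        nlinarith
      have hmainB : ((2*n : ℕ) : ℝ)^d / ((Nat.factorial d : ℝ) * Pr)
          ≤ 2^(k-1) * (k:ℝ)^d := by
        rw [hMain n]
        have hnk' : (n:ℝ) ≤ (k:ℝ) := by exact_mod_cast le_of_lt hnk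
        have hnd : (n:ℝ)^d ≤ (k:ℝ)^d := pow_le_pow_left₀ (by positivity) hnk' d
        calc 2 ^ (k - 1) * (n : ℝ) ^ d /
              ((Nat.factorial l : ℝ) * Nat.factorial k * Nat.factorial d)
            ≤ 2 ^ (k - 1) * (n : ℝ) ^ d := div_le_self (by positivity) hden
          _ ≤ 2^(k-1) * (k:ℝ)^d := mul_le_mul_of_nonneg_left hnd (by positivity)
      have hmain0 : (0:ℝ) ≤ ((2*n : ℕ) : ℝ)^d / ((Nat.factorial d : ℝ) * Pr) := by
        positivity
      have hstep := htri ((pkl k l n : ℝ))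
        (((2*n : ℕ) : ℝ)^d / ((Nat.factorial d : ℝ) * Pr)) (by positivity) hmain0
      have hBn : B ≤ (C₁ + B + 1) * (n:ℝ)^(d-1 : ℕ) := by
        have h1 : C₁ + B + 1 ≤ (C₁ + B + 1) * (n:ℝ)^(d-1 : ℕ) :=
          le_mul_of_one_le_right (by positivity) hpow1
        linarith
      calc |(pkl k l n : ℝ) - ((2*n : ℕ) : ℝ)^d / ((Nat.factorial d : ℝ) * Pr)|
          ≤ (pkl k l n : ℝ) + ((2*n : ℕ) : ℝ)^d / ((Nat.factorial d : ℝ) * Pr) := hstep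
        _ ≤ ((3*k : ℕ):ℝ)^(d+1) + 2^(k-1) * (k:ℝ)^d := add_le_add hpklB hmainB
        _ = B := hB.symm
        _ ≤ (C₁ + B + 1) * (n:ℝ)^(d-1 : ℕ) := hBn
    · -- large n
      have hub := (pkl_bounds k l n hk hl).1
      have hlb := (pkl_bounds k l n hk hl).2 hnk
      have h2n1 : 1 ≤ 2*n := by omega
      have h2nk1 : 1 ≤ 2*n - k := by omega
      have hA1 := hC (2*n) h2n1
      have hA0 := hC (2*n - k) h2nk1
      rw [abs_le] at hA1 hA0
      have hNle : ((2*n - k : ℕ):ℝ) ≤ ((2*n : ℕ):ℝ) := by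
        exact_mod_cast Nat.sub_le _ _
      have hN0nn : (0:ℝ) ≤ ((2*n - k : ℕ):ℝ) := Nat.cast_nonneg _
      have hauxd : ((2*n - k : ℕ):ℝ)^d ≤ ((2*n : ℕ):ℝ)^d := pow_le_pow_left₀ hN0nn hNle d
      have hauxd1 : ((2*n - k : ℕ):ℝ)^(d-1) ≤ ((2*n : ℕ):ℝ)^(d-1) :=
        pow_le_pow_left₀ hN0nn hNle (d-1)
      have hgap : ((2*n : ℕ):ℝ)^d - ((2*n - k : ℕ):ℝ)^d
          ≤ (d:ℝ) * (k:ℝ) * ((2*n : ℕ):ℝ)^(d-1) := by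
        obtain ⟨e, he⟩ : ∃ e, d = e + 1 := ⟨d - 1, by omega⟩
        have hnat := lemA e (2*n - k) k
        rw [show 2*n - k + k = 2*n by omega] at hnat
        have hcast := (Nat.cast_le (α := ℝ)).2 hnat
        push_cast at hcast
        rw [he]
        simp only [Nat.add_sub_cancel]
        push_cast
        linarith
      have hgapdiv : ((2*n : ℕ):ℝ)^d / ((Nat.factorial d : ℝ) * Pr)
          - ((2*n - k : ℕ):ℝ)^d / ((Nat.factorial d : ℝ) * Pr)
          ≤ (d:ℝ) * (k:ℝ) * ((2*n : ℕ):ℝ)^(d-1) := by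
        rw [div_sub_div_same]
        calc (((2*n : ℕ):ℝ)^d - ((2*n - k : ℕ):ℝ)^d) / ((Nat.factorial d : ℝ) * Pr)
            ≤ (((2*n : ℕ):ℝ)^d - ((2*n - k : ℕ):ℝ)^d) := div_le_self (by linarith) hPr1
          _ ≤ (d:ℝ) * (k:ℝ) * ((2*n : ℕ):ℝ)^(d-1) := hgap
      have hubR : (pkl k l n : ℝ) ≤ (Acnt (ws0 k l ++ [1]) (2*n) : ℝ) := by
        exact_mod_cast hub
      have hlbR : (Acnt (ws0 k l ++ [1]) (2*n - k) : ℝ) ≤ (pkl k l n : ℝ) := by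
        exact_mod_cast hlb
      have hfinal : |(pkl k l n : ℝ) - ((2*n : ℕ):ℝ)^d / ((Nat.factorial d : ℝ) * Pr)|
          ≤ (C₀ + (d:ℝ)*(k:ℝ)) * ((2*n : ℕ):ℝ)^(d-1) := by
        rw [abs_le]
        have hd0 : (0:ℝ) ≤ (d:ℝ)*(k:ℝ) := by positivity
        have hCp : 0 ≤ C₀ * ((2*n - k : ℕ):ℝ)^(d-1) := by positivity
        have hmono : C₀ * ((2*n - k : ℕ):ℝ)^(d-1) ≤ C₀ * ((2*n : ℕ):ℝ)^(d-1) := by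
          nlinarith
        constructor
        · nlinarith [hA0.1, hA0.2, hA1.1, hA1.2]
        · nlinarith [hA1.1, hA1.2]
      have h2pow : ((2*n : ℕ):ℝ)^(d-1) = 2^(d-1) * (n:ℝ)^(d-1) := by
        push_cast
        rw [mul_pow]
      calc |(pkl k l n : ℝ) - ((2*n : ℕ):ℝ)^d / ((Nat.factorial d : ℝ) * Pr)|
          ≤ (C₀ + (d:ℝ)*(k:ℝ)) * ((2*n : ℕ):ℝ)^(d-1) := hfinal
        _ = C₁ * (n:ℝ)^(d-1) := by rw [h2pow, hC₁]; ring
        _ ≤ (C₁ + B + 1) * (n:ℝ)^(d-1) := by nlinarith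

end Aux
end

section
/- For every n ≥ 1, p(2,n) ≤ p(n)² + Σ_{i=1}^{n} (p(i) + p(i−1))·p(n−i)². -/
/-- Height of a rectangle. -/
def hgt (R : Rect) : ℕ := R.2.2.2 - R.2.2.1

lemma col_sum {n : ℕ} {T : Finset Rect} (hT : IsTiling 2 n T) (x : ℕ) (hx : x < 2) :
    ∑ R ∈ T.filter (fun R => R.1 ≤ x ∧ x < R.2.1), hgt R = n := by
  classical
  have key : (T.filter (fun R => R.1 ≤ x ∧ x < R.2.1)).biUnion
      (fun R => Finset.Ico R.2.2.1 R.2.2.2) = Finset.range n := by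
    ext j
    simp only [Finset.mem_biUnion, Finset.mem_filter, Finset.mem_Ico, Finset.mem_range]
    constructor
    · rintro ⟨R, ⟨hR, _, _⟩, _, hj⟩
      exact lt_of_lt_of_le hj ((hT.1 R hR).2.2.2)
    · intro hj
      obtain ⟨R, ⟨hR, hc⟩, -⟩ := hT.2 x hx j hj
      exact ⟨R, ⟨hR, hc.1, hc.2.1⟩, hc.2.2.1, hc.2.2.2⟩
  have hdisj : ∀ R1 ∈ T.filter (fun R => R.1 ≤ x ∧ x < R.2.1),
      ∀ R2 ∈ T.filter (fun R => R.1 ≤ x ∧ x < R.2.1), R1 ≠ R2 →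
      Disjoint (Finset.Ico R1.2.2.1 R1.2.2.2) (Finset.Ico R2.2.2.1 R2.2.2.2) := by
    intro R1 h1 R2 h2 hne
    simp only [Finset.mem_filter] at h1 h2
    rw [Finset.disjoint_left]
    intro j hj1 hj2
    simp only [Finset.mem_Ico] at hj1 hj2
    have hjn : j < n := lt_of_lt_of_le hj1.2 ((hT.1 R1 h1.1).2.2.2)
    obtain ⟨R, -, hu⟩ := hT.2 x hx j hjn
    have e1 : R1 = R := hu R1 ⟨h1.1, h1.2.1, h1.2.2, hj1.1, hj1.2⟩
    have e2 : R2 = R := hu R2 ⟨h2.1, h2.2.1, h2.2.2, hj2.1, hj2.2⟩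
    exact hne (e1.trans e2.symm)
  have hc := Finset.card_biUnion hdisj
  rw [key, Finset.card_range] at hc
  rw [hc]
  exact Finset.sum_congr rfl (fun R _ => (Nat.card_Ico _ _).symm)

def mult1 (s : Multiset ℕ) : Multiset (ℕ × ℕ) := s.map (fun j => (min 1 j, max 1 j))
def mult2 (s : Multiset ℕ) : Multiset (ℕ × ℕ) := s.map (fun j => (min 2 j, max 2 j))

/-- The counting data type. -/
abbrev Dom (n : ℕ) : Type :=
  (Nat.Partition n × Nat.Partition n) ⊕
  ((i : Finset.Icc 1 n) × (Nat.Partition i.1 × (Nat.Partition (n - i.1) × Nat.Partition (n - i.1))))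

def Fmap (n : ℕ) : Dom n → Multiset (ℕ × ℕ)
  | Sum.inl (l, m) => mult1 l.parts + mult1 m.parts
  | Sum.inr ⟨_, v, l, m⟩ => mult2 v.parts + (mult1 l.parts + mult1 m.parts)

lemma main_surj {n : ℕ} (hn : 1 ≤ n) {T : Finset Rect} (hT : IsTiling 2 n T) :
    ∃ d : Dom n, Fmap n d = blocksOf T := by
  classical
  set q2 : Rect → Prop := fun R => R.1 = 0 ∧ R.2.1 = 2 with hq2
  set qL : Rect → Prop := fun R => R.1 = 0 ∧ R.2.1 = 1 with hqL
  set qR : Rect → Prop := fun R => R.1 = 1 ∧ R.2.1 = 2 with hqR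
  have tri : ∀ R ∈ T, (q2 R ∨ qL R ∨ qR R) := by
    intro R hR
    have hb := hT.1 R hR
    simp only [hq2, hqL, hqR]
    omega
  -- splitting the multiset of rectangles
  have hsplit : T.val = T.val.filter q2 + (T.val.filter qL + T.val.filter qR) := by
    ext a
    simp only [Multiset.count_add, Multiset.count_filter]
    by_cases ha : a ∈ T
    · have := tri a ha
      simp only [hq2, hqL, hqR] at this ⊢
      split_ifs <;> omega
    · have : Multiset.count a T.val = 0 := Multiset.count_eq_zero.mpr ha
      rw [this]; split_ifs <;> simp
  -- column sums
  have hcol0 : ∑ R ∈ T.filter q2, hgt R + ∑ R ∈ T.filter qL, hgt R = n := by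
    have h0 := col_sum hT 0 (by norm_num)
    calc ∑ R ∈ T.filter q2, hgt R + ∑ R ∈ T.filter qL, hgt R
        = ∑ R ∈ T, ((if q2 R then hgt R else 0) + (if qL R then hgt R else 0)) := by
          rw [Finset.sum_add_distrib, Finset.sum_filter, Finset.sum_filter]
      _ = ∑ R ∈ T.filter (fun R => R.1 ≤ 0 ∧ 0 < R.2.1), hgt R := by
          rw [Finset.sum_filter]
          refine Finset.sum_congr rfl fun R hR => ?_
          have hb := hT.1 R hR
          simp only [hq2, hqL]
          split_ifs <;> omega
      _ = n := h0
  have hcol1 : ∑ R ∈ T.filter q2, hgt R + ∑ R ∈ T.filter qR, hgt R = n := by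
    have h1 := col_sum hT 1 (by norm_num)
    calc ∑ R ∈ T.filter q2, hgt R + ∑ R ∈ T.filter qR, hgt R
        = ∑ R ∈ T, ((if q2 R then hgt R else 0) + (if qR R then hgt R else 0)) := by
          rw [Finset.sum_add_distrib, Finset.sum_filter, Finset.sum_filter]
      _ = ∑ R ∈ T.filter (fun R => R.1 ≤ 1 ∧ 1 < R.2.1), hgt R := by
          rw [Finset.sum_filter]
          refine Finset.sum_congr rfl fun R hR => ?_
          have hb := hT.1 R hR
          simp only [hq2, hqR]
          split_ifs <;> omega
      _ = n := h1
  -- sums as multiset sums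
  have hsum2 : ((T.val.filter q2).map hgt).sum = ∑ R ∈ T.filter q2, hgt R := by
    rw [Finset.sum]; rw [Finset.filter_val]
  have hsumL : ((T.val.filter qL).map hgt).sum = ∑ R ∈ T.filter qL, hgt R := by
    rw [Finset.sum]; rw [Finset.filter_val]
  have hsumR : ((T.val.filter qR).map hgt).sum = ∑ R ∈ T.filter qR, hgt R := by
    rw [Finset.sum]; rw [Finset.filter_val]
  -- positivity of heights
  have hpos : ∀ (q : Rect → Prop) [DecidablePred q] {i : ℕ},
      i ∈ (T.val.filter q).map hgt → 0 < i := by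
    intro q _ i hi
    obtain ⟨R, hR, rfl⟩ := Multiset.mem_map.mp hi
    have hRT : R ∈ T := Multiset.mem_of_mem_filter hR
    have hb := hT.1 R hRT
    simp only [hgt]
    omega
  -- blocksOf computation
  have hb2 : (T.val.filter q2).map blockOf = mult2 ((T.val.filter q2).map hgt) := by
    rw [mult2, Multiset.map_map]
    refine Multiset.map_congr rfl fun R hR => ?_
    have h := (Multiset.mem_filter.mp hR).2
    simp only [hq2] at h
    simp [blockOf, hgt, Function.comp, h.1, h.2]
  have hbL : (T.val.filter qL).map blockOf = mult1 ((T.val.filter qL).map hgt) := by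
    rw [mult1, Multiset.map_map]
    refine Multiset.map_congr rfl fun R hR => ?_
    have h := (Multiset.mem_filter.mp hR).2
    simp only [hqL] at h
    simp [blockOf, hgt, Function.comp, h.1, h.2]
  have hbR : (T.val.filter qR).map blockOf = mult1 ((T.val.filter qR).map hgt) := by
    rw [mult1, Multiset.map_map]
    refine Multiset.map_congr rfl fun R hR => ?_
    have h := (Multiset.mem_filter.mp hR).2
    simp only [hqR] at h
    simp [blockOf, hgt, Function.comp, h.1, h.2]
  have hblocks : blocksOf T = mult2 ((T.val.filter q2).map hgt) +
      (mult1 ((T.val.filter qL).map hgt) + mult1 ((T.val.filter qR).map hgt)) := by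
    rw [blocksOf]
    conv_lhs => rw [hsplit]
    rw [Multiset.map_add, Multiset.map_add, hb2, hbL, hbR]
  by_cases h2 : T.val.filter q2 = 0
  · -- no full-width blocks
    have hS2 : ∑ R ∈ T.filter q2, hgt R = 0 := by
      rw [← hsum2, h2]; simp
    refine ⟨Sum.inl (⟨(T.val.filter qL).map hgt, hpos qL, by rw [hsumL]; omega⟩,
      ⟨(T.val.filter qR).map hgt, hpos qR, by rw [hsumR]; omega⟩), ?_⟩
    show mult1 ((T.val.filter qL).map hgt) + mult1 ((T.val.filter qR).map hgt) = blocksOf T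
    rw [hblocks, h2]
    simp [mult2]
  · -- some full-width block
    set i : ℕ := ∑ R ∈ T.filter q2, hgt R with hi
    have hi1 : 1 ≤ i := by
      obtain ⟨R, hR⟩ := Multiset.exists_mem_of_ne_zero h2
      obtain ⟨s, hs⟩ := Multiset.exists_cons_of_mem (Multiset.mem_map_of_mem hgt hR)
      have hp : 0 < hgt R := hpos q2 (Multiset.mem_map_of_mem hgt hR)
      have : ((T.val.filter q2).map hgt).sum = hgt R + s.sum := by rw [hs, Multiset.sum_cons]
      rw [hsum2] at this
      omega
    have hin : i ≤ n := by omega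
    have h2sum : ((T.val.filter q2).map hgt).sum = i := hsum2
    have hLsum : ((T.val.filter qL).map hgt).sum = n - i := by rw [hsumL]; omega
    have hRsum : ((T.val.filter qR).map hgt).sum = n - i := by rw [hsumR]; omega
    refine ⟨Sum.inr ⟨⟨i, Finset.mem_Icc.mpr ⟨hi1, hin⟩⟩,
      ⟨(T.val.filter q2).map hgt, hpos q2, h2sum⟩,
      ⟨(T.val.filter qL).map hgt, hpos qL, hLsum⟩,
      ⟨(T.val.filter qR).map hgt, hpos qR, hRsum⟩⟩, ?_⟩
    exact hblocks.symm

/-- `p(2,n) ≤ p(n)² + Σ_{i=1}^n (p(i)+p(i-1))·p(n-i)²`. -/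
theorem rectP_two_upper (n : ℕ) (hn : 1 ≤ n) :
    rectP 2 n ≤
      eulerP n ^ 2 + ∑ i ∈ Finset.Icc 1 n, (eulerP i + eulerP (i - 1)) * eulerP (n - i) ^ 2 := by
  classical
  have hsub : {M : Multiset (ℕ × ℕ) | ∃ T : Finset Rect, IsTiling 2 n T ∧ blocksOf T = M}
      ⊆ Set.range (Fmap n) := by
    rintro M ⟨T, hT, rfl⟩
    exact main_surj hn hT
  have h1 : rectP 2 n ≤ Nat.card (Dom n) := by
    rw [rectP]
    calc Nat.card _ ≤ Nat.card (Set.range (Fmap n)) :=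
          Nat.card_mono (Set.finite_range _) hsub
      _ ≤ Nat.card (Dom n) := Finite.card_range_le _
  have hcard : Nat.card (Dom n) =
      eulerP n ^ 2 + ∑ i ∈ Finset.Icc 1 n, eulerP i * eulerP (n - i) ^ 2 := by
    rw [Nat.card_eq_fintype_card, Fintype.card_sum, Fintype.card_prod, Fintype.card_sigma]
    congr 1
    · rw [eulerP, sq]
    · rw [← Finset.sum_coe_sort (Finset.Icc 1 n) (fun i => eulerP i * eulerP (n - i) ^ 2)]
      refine Finset.sum_congr rfl fun i _ => ?_
      simp [eulerP, sq, Fintype.card_prod, mul_assoc]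
  refine le_trans h1 (le_trans (le_of_eq hcard) ?_)
  refine Nat.add_le_add_left (Finset.sum_le_sum fun i _ => ?_) _
  exact Nat.mul_le_mul_right _ (Nat.le_add_right _ _)
end

section
/- For every n ≥ 0, p(2,n) = Σ_{i=0}^{n} (p(i) − p(i−1)) · p̃(2, n−i), where p(−1) = 0 and p̃(2,0) = 1. -/
/-- The Euler partition function extended by `0` to negative integers. -/
noncomputable def eulerPZ (z : ℤ) : ℤ := if z < 0 then 0 else (eulerP z.toNat : ℤ)

/-- `p̃(2,n)`: the number of block multisets of tilings of `[0,2] × [0,n]` using only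
blocks of side lengths `{1,i}` with `i ≥ 1`. -/
noncomputable def ptilde (n : ℕ) : ℕ := rectPA 2 n (fun b => b.1 = 1)

def shiftR (s : ℕ) (R : Rect) : Rect := (R.1, R.2.1, R.2.2.1 + s, R.2.2.2 + s)
def unshiftR (s : ℕ) (R : Rect) : Rect := (R.1, R.2.1, R.2.2.1 - s, R.2.2.2 - s)

lemma blockOf_shiftR (s : ℕ) (R : Rect) : blockOf (shiftR s R) = blockOf R := by
  simp only [blockOf, shiftR, Prod.mk.injEq]
  constructor <;> omega

lemma shiftR_injective (s : ℕ) : Function.Injective (shiftR s) := by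
  rintro ⟨a,b,c,d⟩ ⟨a',b',c',d'⟩ h
  simp only [shiftR, Prod.ext_iff] at h ⊢
  omega

/-- Stacking two tilings vertically. -/
lemma stack {m a b : ℕ} {T₁ T₂ : Finset Rect} (h₁ : IsTiling m a T₁) (h₂ : IsTiling m b T₂) :
    ∃ U : Finset Rect, IsTiling m (a + b) U ∧ blocksOf U = blocksOf T₁ + blocksOf T₂ := by
  classical
  set S := T₂.image (shiftR a) with hS
  have hmemS : ∀ {R : Rect}, R ∈ S → ∃ R₂ ∈ T₂, shiftR a R₂ = R := by
    intro R hR; exact Finset.mem_image.mp hR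
  have hdisj : Disjoint T₁ S := by
    rw [Finset.disjoint_left]
    intro R hR1 hRS
    obtain ⟨R₂, hR₂, rfl⟩ := hmemS hRS
    have b₁ := h₁.1 _ hR1
    simp only [shiftR] at b₁
    omega
  refine ⟨T₁.disjUnion S hdisj, ⟨?_, ?_⟩, ?_⟩
  · intro R hR
    rcases Finset.mem_disjUnion.mp hR with h | h
    · have := h₁.1 R h; omega
    · obtain ⟨R₂, hR₂, rfl⟩ := hmemS h
      have := h₂.1 R₂ hR₂
      simp only [shiftR]
      omega
  · intro i hi j hj
    by_cases hja : j < a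
    · obtain ⟨R, ⟨hR, hc⟩, huniq⟩ := h₁.2 i hi j hja
      refine ⟨R, ⟨Finset.mem_disjUnion.mpr (Or.inl hR), hc⟩, ?_⟩
      rintro R' ⟨hR', hc'⟩
      rcases Finset.mem_disjUnion.mp hR' with h | h
      · exact huniq R' ⟨h, hc'⟩
      · obtain ⟨R₂, hR₂, rfl⟩ := hmemS h
        exfalso; obtain ⟨_, _, hcl, _⟩ := hc'
        simp only [shiftR] at hcl
        omega
    · push_neg at hja
      obtain ⟨R, ⟨hR, hc⟩, huniq⟩ := h₂.2 i hi (j - a) (by omega)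
      have hcshift : cellIn (shiftR a R) i j := by
        obtain ⟨u1,u2,u3,u4⟩ := hc
        exact ⟨u1, u2, by simp [shiftR]; omega, by simp [shiftR]; omega⟩
      refine ⟨shiftR a R, ⟨Finset.mem_disjUnion.mpr (Or.inr (Finset.mem_image_of_mem _ hR)), hcshift⟩, ?_⟩
      rintro R' ⟨hR', hc'⟩
      rcases Finset.mem_disjUnion.mp hR' with h | h
      · exfalso
        have := h₁.1 R' h
        obtain ⟨_,_,_,hd⟩ := hc'
        omega
      · obtain ⟨R₂, hR₂, rfl⟩ := hmemS h
        have : R₂ = R := by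
          apply huniq
          refine ⟨hR₂, ?_⟩
          obtain ⟨u1,u2,u3,u4⟩ := hc'
          simp only [shiftR] at u3 u4
          exact ⟨u1, u2, by omega, by omega⟩
        rw [this]
  · have : (T₁.disjUnion S hdisj).val = T₁.val + S.val := rfl
    simp only [blocksOf, this, Multiset.map_add]
    congr 1
    rw [hS, Finset.image_val, Multiset.dedup_eq_self.mpr]
    · rw [Multiset.map_map]
      simp [Function.comp, blockOf_shiftR]
    · exact Multiset.Nodup.map (shiftR_injective a) T₂.nodup

lemma single_tiling {m j : ℕ} (hm : 1 ≤ m) (hj : 1 ≤ j) :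
    IsTiling m j {((0,m,0,j) : Rect)} := by
  constructor
  · intro R hR
    rw [Finset.mem_singleton] at hR
    subst hR
    simpa using ⟨hm, hj⟩
  · intro i hi k hk
    refine ⟨(0,m,0,j), ⟨Finset.mem_singleton_self _, ?_⟩, ?_⟩
    · exact ⟨Nat.zero_le _, hi, Nat.zero_le _, hk⟩
    · rintro R ⟨hR, -⟩
      exact Finset.mem_singleton.mp hR

lemma blocksOf_single (R : Rect) : blocksOf {R} = {blockOf R} := by
  simp [blocksOf]

/-- Compose: stack a multiset of full-width blocks on top of a tiling. -/
lemma compose (J : Multiset ℕ) (hJ : ∀ j ∈ J, 2 ≤ j) {m : ℕ} {T : Finset Rect}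
    (hT : IsTiling 2 m T) :
    ∃ U, IsTiling 2 (m + J.sum) U ∧
      blocksOf U = blocksOf T + J.map (fun j => ((2, j) : ℕ × ℕ)) := by
  induction J using Multiset.induction_on with
  | empty => exact ⟨T, by simpa using hT, by simp⟩
  | cons j J ih =>
    obtain ⟨U, hU, hUb⟩ := ih (fun x hx => hJ x (Multiset.mem_cons_of_mem hx))
    have hj : 2 ≤ j := hJ j (Multiset.mem_cons_self _ _)
    obtain ⟨U', hU', hU'b⟩ := stack hU (single_tiling (m := 2) (j := j) (by omega) (by omega))
    refine ⟨U', ?_, ?_⟩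
    · have : m + J.sum + j = m + (j ::ₘ J).sum := by
        rw [Multiset.sum_cons]; omega
      rwa [this] at hU'
    · rw [hU'b, hUb, blocksOf_single]
      have hb : blockOf ((0,2,0,j) : Rect) = (2, j) := by
        simp only [blockOf, Prod.mk.injEq]
        constructor <;> omega
      rw [hb, Multiset.map_cons]
      rw [← Multiset.singleton_add]
      abel

/-- Split a tiling at height `k` when no block crosses level `k`. -/
lemma splitT {m n k : ℕ} {T : Finset Rect} (hT : IsTiling m n T) (hk : k ≤ n)
    (H : ∀ R ∈ T, R.2.2.2 ≤ k ∨ k ≤ R.2.2.1) :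
    IsTiling m k (T.filter (fun R => R.2.2.2 ≤ k)) ∧
    IsTiling m (n - k) ((T.filter (fun R => ¬ R.2.2.2 ≤ k)).image (unshiftR k)) ∧
    blocksOf ((T.filter (fun R => ¬ R.2.2.2 ≤ k)).image (unshiftR k))
      = blocksOf (T.filter (fun R => ¬ R.2.2.2 ≤ k)) ∧
    blocksOf T = blocksOf (T.filter (fun R => R.2.2.2 ≤ k))
      + blocksOf (T.filter (fun R => ¬ R.2.2.2 ≤ k)) := by
  classical
  set Tl := T.filter (fun R => R.2.2.2 ≤ k) with hTl
  set Th := T.filter (fun R => ¬ R.2.2.2 ≤ k) with hTh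
  have hThc : ∀ R ∈ Th, R ∈ T ∧ k ≤ R.2.2.1 ∧ R.2.2.1 < R.2.2.2 ∧ R.2.2.2 ≤ n := by
    intro R hR
    rw [hTh, Finset.mem_filter] at hR
    obtain ⟨hRT, hRk⟩ := hR
    have hb := hT.1 R hRT
    exact ⟨hRT, (H R hRT).resolve_left hRk, hb.2.2.1, hb.2.2.2⟩
  have hinj : Set.InjOn (unshiftR k) Th := by
    intro R hR R' hR' hEq
    obtain ⟨-, h1, h2, -⟩ := hThc R hR
    obtain ⟨-, h1', h2', -⟩ := hThc R' hR'
    obtain ⟨a,b,c,d⟩ := R; obtain ⟨a',b',c',d'⟩ := R'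
    simp only [unshiftR, Prod.ext_iff] at hEq ⊢
    simp only at h1 h2 h1' h2'
    omega
  refine ⟨⟨?_, ?_⟩, ⟨?_, ?_⟩, ?_, ?_⟩
  · intro R hR
    rw [hTl, Finset.mem_filter] at hR
    have := hT.1 R hR.1
    have := hR.2
    omega
  · intro i hi j hj
    obtain ⟨R, ⟨hRT, hc⟩, huniq⟩ := hT.2 i hi j (by omega)
    have hRl : R ∈ Tl := by
      rw [hTl, Finset.mem_filter]
      refine ⟨hRT, ?_⟩
      obtain ⟨-,-,h3,h4⟩ := hc
      rcases H R hRT with h | h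
      · exact h
      · omega
    refine ⟨R, ⟨hRl, hc⟩, ?_⟩
    rintro R' ⟨hR', hc'⟩
    exact huniq R' ⟨(Finset.mem_filter.mp hR').1, hc'⟩
  · intro R hR
    obtain ⟨R₂, hR₂, rfl⟩ := Finset.mem_image.mp hR
    obtain ⟨-, h1, h2, h3⟩ := hThc R₂ hR₂
    have := hT.1 R₂ (Finset.mem_filter.mp hR₂).1
    simp only [unshiftR]
    omega
  · intro i hi j hj
    obtain ⟨R, ⟨hRT, hc⟩, huniq⟩ := hT.2 i hi (j + k) (by omega)
    have hRh : R ∈ Th := by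
      rw [hTh, Finset.mem_filter]
      obtain ⟨-,-,h3,h4⟩ := hc
      exact ⟨hRT, by omega⟩
    obtain ⟨-, hk1, hk2, -⟩ := hThc R hRh
    have hcell : cellIn (unshiftR k R) i j := by
      obtain ⟨u1,u2,u3,u4⟩ := hc
      exact ⟨u1, u2, by simp [unshiftR]; omega, by simp [unshiftR]; omega⟩
    refine ⟨unshiftR k R, ⟨Finset.mem_image_of_mem _ hRh, hcell⟩, ?_⟩
    rintro R' ⟨hR', hc'⟩
    obtain ⟨R₂, hR₂, rfl⟩ := Finset.mem_image.mp hR'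
    obtain ⟨hR₂T, g1, g2, -⟩ := hThc R₂ hR₂
    have : R₂ = R := by
      apply huniq
      refine ⟨hR₂T, ?_⟩
      obtain ⟨u1,u2,u3,u4⟩ := hc'
      simp only [unshiftR] at u3 u4
      exact ⟨u1, u2, by omega, by omega⟩
    rw [this]
  · simp only [blocksOf]
    rw [Finset.image_val, Multiset.dedup_eq_self.mpr, Multiset.map_map]
    · apply Multiset.map_congr rfl
      intro R hR
      obtain ⟨-, h1, h2, -⟩ := hThc R hR
      simp only [Function.comp, blockOf, unshiftR, Prod.mk.injEq]
      constructor <;> omega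
    · exact Multiset.Nodup.map_on hinj Th.nodup
  · simp only [blocksOf, hTl, hTh, ← Multiset.map_add]
    congr 1
    rw [Finset.filter_val, Finset.filter_val]
    exact (Multiset.filter_add_not _ _).symm

lemma blockOf_fst_one {n : ℕ} {T : Finset Rect} (hT : IsTiling 2 n T) {R : Rect}
    (hR : R ∈ T) (hnt : ¬ (R.2.1 - R.1 = 2 ∧ R.2.2.1 + 2 ≤ R.2.2.2)) :
    (blockOf R).1 = 1 := by
  have hb := hT.1 R hR
  simp only [blockOf]
  omega

/-- Decomposition of a tiling of the 2×n strip. -/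
lemma decomp : ∀ n : ℕ, ∀ T : Finset Rect, IsTiling 2 n T →
    ∃ (i : ℕ) (J : Multiset ℕ) (T' : Finset Rect),
      i ≤ n ∧ (∀ j ∈ J, 2 ≤ j) ∧ J.sum = i ∧ IsTiling 2 (n - i) T' ∧
      (∀ b ∈ blocksOf T', b.1 = 1) ∧
      blocksOf T = J.map (fun j => ((2, j) : ℕ × ℕ)) + blocksOf T' := by
  classical
  intro n
  induction n using Nat.strong_induction_on with
  | _ n IH =>
  intro T hT
  set Tall := T.filter (fun R => R.2.1 - R.1 = 2 ∧ R.2.2.1 + 2 ≤ R.2.2.2) with hTall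
  by_cases hne : Tall.Nonempty
  · obtain ⟨B, hBTall, hBmax⟩ := Finset.exists_max_image Tall (fun R => R.2.2.2) hne
    rw [hTall, Finset.mem_filter] at hBTall
    obtain ⟨hBT, hBw, hBh⟩ := hBTall
    have hBb := hT.1 B hBT
    set c := B.2.2.1 with hc
    set d := B.2.2.2 with hd
    -- no other block crosses rows [c, d)
    have cross : ∀ R ∈ T, R ≠ B → R.2.2.2 ≤ c ∨ d ≤ R.2.2.1 := by
      intro R hR hRB
      by_contra hcon
      push_neg at hcon
      obtain ⟨g1, g2⟩ := hcon
      have hRb := hT.1 R hR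
      set j := max c R.2.2.1 with hj
      have hjn : j < n := by omega
      have hi2 : R.1 < 2 := by omega
      obtain ⟨W, -, huniq⟩ := hT.2 R.1 hi2 j hjn
      have e1 : R = W := huniq R ⟨hR, ⟨le_refl _, by omega, by omega, by omega⟩⟩
      have e2 : B = W := huniq B ⟨hBT, ⟨by omega, by omega, by omega, by omega⟩⟩
      exact hRB (e1.trans e2.symm)
    -- split at level d
    have Hd : ∀ R ∈ T, R.2.2.2 ≤ d ∨ d ≤ R.2.2.1 := by
      intro R hR
      by_cases hRB : R = B
      · subst hRB; left; omega
      · rcases cross R hR hRB with h | h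
        · left; omega
        · right; exact h
    obtain ⟨hTl, hTh, hThb, hTsum⟩ := splitT hT (by omega : d ≤ n) Hd
    set Tl := T.filter (fun R => R.2.2.2 ≤ d) with hTlDef
    set Th2 := (T.filter (fun R => ¬ R.2.2.2 ≤ d)).image (unshiftR d) with hTh2Def
    -- blocks above d are not tall (maximality)
    have hupper1 : ∀ b ∈ blocksOf Th2, b.1 = 1 := by
      rw [hThb]
      intro b hb
      obtain ⟨R, hR, rfl⟩ := Multiset.mem_map.mp hb
      rw [Finset.mem_val, Finset.mem_filter] at hR
      obtain ⟨hRT, hRd⟩ := hR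
      exact blockOf_fst_one hT hRT (by
        intro hcontra
        have : R ∈ Tall := by rw [hTall, Finset.mem_filter]; exact ⟨hRT, hcontra⟩
        have := hBmax R this
        omega)
    -- split Tl at level c
    have Hc : ∀ R ∈ Tl, R.2.2.2 ≤ c ∨ c ≤ R.2.2.1 := by
      intro R hR
      rw [hTlDef, Finset.mem_filter] at hR
      by_cases hRB : R = B
      · subst hRB; right; omega
      · rcases cross R hR.1 hRB with h | h
        · left; exact h
        · right; omega
    obtain ⟨hTll, -, -, hTlsum⟩ := splitT hTl (by omega : c ≤ d) Hc
    -- the part of Tl above c is exactly {B}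
    have hsing : Tl.filter (fun R => ¬ R.2.2.2 ≤ c) = {B} := by
      apply Finset.ext
      intro R
      rw [Finset.mem_filter, Finset.mem_singleton]
      constructor
      · rintro ⟨hRTl, hRc⟩
        have hRTl' := hRTl
        rw [hTlDef, Finset.mem_filter] at hRTl'
        by_contra hRB
        have hb := hT.1 R hRTl'.1
        rcases cross R hRTl'.1 hRB with h | h
        · omega
        · omega
      · rintro rfl
        constructor
        · rw [hTlDef, Finset.mem_filter]; exact ⟨hBT, by omega⟩
        · omega
    have hBblock : blockOf B = (2, d - c) := by
      simp only [blockOf, Prod.mk.injEq]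
      constructor <;> omega
    have hTlsum' : blocksOf Tl = blocksOf (Tl.filter (fun R => R.2.2.2 ≤ c)) + {(2, d - c)} := by
      rw [hTlsum, hsing, blocksOf_single, hBblock]
    -- recurse on the part below c
    have hcn : c < n := by omega
    obtain ⟨i₀, J₀, T₀', hi₀, hJ₀, hJ₀sum, hT₀', hT₀'blocks, hT₀'sum⟩ :=
      IH c hcn _ hTll
    -- stack T₀' (tiling of 2×(c-i₀)) and Th2 (tiling of 2×(n-d))
    obtain ⟨U, hU, hUb⟩ := stack hT₀' hTh
    refine ⟨i₀ + (d - c), (d - c) ::ₘ J₀, U, by omega, ?_, ?_, ?_, ?_, ?_⟩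
    · intro j hj
      rcases Multiset.mem_cons.mp hj with h | h
      · omega
      · exact hJ₀ j h
    · rw [Multiset.sum_cons]; omega
    · have : c - i₀ + (n - d) = n - (i₀ + (d - c)) := by omega
      rwa [this] at hU
    · intro b hb
      rw [hUb] at hb
      rcases Multiset.mem_add.mp hb with h | h
      · exact hT₀'blocks b h
      · exact hupper1 b h
    · rw [hTsum, ← hThb, hTlsum', hT₀'sum, hUb, Multiset.map_cons, ← Multiset.singleton_add]
      abel
  · -- no tall block: everything has fst = 1
    refine ⟨0, 0, T, Nat.zero_le _, by simp, by simp, by simpa using hT, ?_, by simp⟩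
    intro b hb
    obtain ⟨R, hR, rfl⟩ := Multiset.mem_map.mp hb
    refine blockOf_fst_one hT hR ?_
    intro hcontra
    exact hne ⟨R, by rw [hTall, Finset.mem_filter]; exact ⟨hR, hcontra⟩⟩

def Sset (n : ℕ) : Set (Multiset (ℕ × ℕ)) :=
  {M | ∃ T : Finset Rect, IsTiling 2 n T ∧ blocksOf T = M}

def Tset (n : ℕ) : Set (Multiset (ℕ × ℕ)) :=
  {M | ∃ T : Finset Rect, IsTiling 2 n T ∧ blocksOf T = M ∧ ∀ b ∈ M, b.1 = 1}

lemma finite_S (n : ℕ) : (Sset n).Finite := by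
  classical
  set big : Finset Rect :=
    Finset.range 3 ×ˢ Finset.range 3 ×ˢ Finset.range (n+1) ×ˢ Finset.range (n+1) with hbig
  apply Set.Finite.subset ((big.powerset.finite_toSet).image blocksOf)
  rintro M ⟨T, hT, rfl⟩
  refine ⟨T, ?_, rfl⟩
  simp only [Finset.coe_powerset, Set.mem_preimage, Set.mem_powerset_iff,
    Finset.coe_subset, Finset.mem_coe]
  intro R hR
  have := hT.1 R hR
  rw [hbig]
  simp only [Finset.mem_product, Finset.mem_range]
  omega

instance (n : ℕ) : Finite ↥(Sset n) := (finite_S n).to_subtype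

lemma finite_T (n : ℕ) : (Tset n).Finite := by
  apply (finite_S n).subset
  rintro M ⟨T, hT, hM, -⟩
  exact ⟨T, hT, hM⟩

instance (n : ℕ) : Finite ↥(Tset n) := (finite_T n).to_subtype

/-- Number of partitions with no part equal to 1. -/
lemma card_noOne (i : ℕ) :
    (Nat.card {π : Nat.Partition i // 1 ∉ π.parts} : ℤ) =
      (eulerP i : ℤ) - eulerPZ ((i : ℤ) - 1) := by
  classical
  cases i with
  | zero =>
    have hall : ∀ π : Nat.Partition 0, 1 ∉ π.parts := by
      intro π h1
      have := π.parts_sum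
      have : (1:ℕ) ≤ π.parts.sum := Multiset.single_le_sum (fun x hx => Nat.zero_le x) 1 h1
      omega
    have : Nat.card {π : Nat.Partition 0 // 1 ∉ π.parts} = Nat.card (Nat.Partition 0) :=
      Nat.card_congr (Equiv.subtypeUnivEquiv hall)
    rw [this, Nat.card_eq_fintype_card]
    simp [eulerPZ, eulerP]
  | succ k =>
    have E1 : {π : Nat.Partition (k+1) // 1 ∈ π.parts} ≃ Nat.Partition k :=
      { toFun := fun π =>
          ⟨π.1.parts.erase 1,
           by intro j hj; exact π.1.parts_pos (Multiset.mem_of_mem_erase hj),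
           by
             have hc := Multiset.cons_erase π.2
             have := π.1.parts_sum
             have hsum : (1 ::ₘ π.1.parts.erase 1).sum = k + 1 := by rw [hc, this]
             rw [Multiset.sum_cons] at hsum
             omega⟩
        invFun := fun σ =>
          ⟨⟨1 ::ₘ σ.parts,
            by
              intro j hj
              rcases Multiset.mem_cons.mp hj with h | h
              · omega
              · exact σ.parts_pos h,
            by rw [Multiset.sum_cons, σ.parts_sum]; omega⟩,
           Multiset.mem_cons_self _ _⟩
        left_inv := fun π => by
          apply Subtype.ext
          apply Nat.Partition.ext
          exact Multiset.cons_erase π.2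
        right_inv := fun σ => by
          apply Nat.Partition.ext
          exact Multiset.erase_cons_head _ _ }
    have h1 : Fintype.card {π : Nat.Partition (k+1) // 1 ∈ π.parts}
        = Fintype.card (Nat.Partition k) := Fintype.card_congr E1
    have hle : Fintype.card (Nat.Partition k) ≤ Fintype.card (Nat.Partition (k+1)) := by
      rw [← h1]; exact Fintype.card_subtype_le _
    have hc : Fintype.card {π : Nat.Partition (k+1) // ¬ 1 ∈ π.parts}
        = Fintype.card (Nat.Partition (k+1)) - Fintype.card (Nat.Partition k) := by
      rw [Fintype.card_subtype_compl, h1]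
    rw [Nat.card_eq_fintype_card]
    have hz : eulerPZ ((k+1 : ℕ) - 1 : ℤ) = (Fintype.card (Nat.Partition k) : ℤ) := by
      have : ((k+1 : ℕ) : ℤ) - 1 = (k : ℤ) := by push_cast; ring
      rw [this]
      simp [eulerPZ, eulerP]
    rw [hz]
    show ((Fintype.card {π : Nat.Partition (k+1) // ¬ 1 ∈ π.parts} : ℕ) : ℤ) = _
    rw [hc]
    rw [Nat.cast_sub hle]
    rfl


lemma filter_two (P : Multiset ℕ) (M : Multiset (ℕ × ℕ)) (hM : ∀ b ∈ M, b.1 = 1) :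
    (P.map (fun j => ((2, j) : ℕ × ℕ)) + M).filter (fun b => b.1 = 2)
      = P.map (fun j => ((2, j) : ℕ × ℕ)) := by
  rw [Multiset.filter_add]
  rw [Multiset.filter_eq_self.mpr, Multiset.filter_eq_nil.mpr, add_zero]
  · intro b hb
    have := hM b hb
    omega
  · intro b hb
    obtain ⟨j, -, rfl⟩ := Multiset.mem_map.mp hb
    rfl

lemma filter_one (P : Multiset ℕ) (M : Multiset (ℕ × ℕ)) (hM : ∀ b ∈ M, b.1 = 1) :
    (P.map (fun j => ((2, j) : ℕ × ℕ)) + M).filter (fun b => b.1 = 1) = M := by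
  rw [Multiset.filter_add]
  rw [Multiset.filter_eq_self.mpr hM, Multiset.filter_eq_nil.mpr, zero_add]
  intro b hb
  obtain ⟨j, -, rfl⟩ := Multiset.mem_map.mp hb
  simp

lemma natcard_sigma {ι : Type} [Fintype ι] (A : ι → Type) [∀ i, Finite (A i)] :
    Nat.card (Σ i, A i) = ∑ i, Nat.card (A i) := by
  letI : ∀ i, Fintype (A i) := fun i => Fintype.ofFinite (A i)
  simp [Nat.card_eq_fintype_card]

noncomputable def gmap (n : ℕ) :
    (Σ i : Fin (n+1), {π : Nat.Partition i.1 // 1 ∉ π.parts} × ↥(Tset (n - i.1))) → ↥(Sset n) :=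
  fun x =>
    ⟨(x.2.1.1.parts.map fun j => ((2, j) : ℕ × ℕ)) + x.2.2.1, by
      obtain ⟨T', hT', hbl, h1⟩ := x.2.2.2
      have hJ : ∀ j ∈ x.2.1.1.parts, 2 ≤ j := by
        intro j hj
        have h0 := x.2.1.1.parts_pos hj
        have h1 : j ≠ 1 := by
          intro h; exact x.2.1.2 (h ▸ hj)
        omega
      obtain ⟨U, hU, hUb⟩ := compose x.2.1.1.parts hJ hT'
      have hsum : n - x.1.1 + x.2.1.1.parts.sum = n := by
        rw [x.2.1.1.parts_sum]
        have := x.1.2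
        omega
      rw [hsum] at hU
      exact ⟨U, hU, by rw [hUb, hbl]; exact add_comm _ _⟩⟩

lemma gmap_bij (n : ℕ) : Function.Bijective (gmap n) := by
  classical
  constructor
  · rintro ⟨i, π, M⟩ ⟨i', π', M'⟩ h
    have hval : (π.1.parts.map fun j => ((2, j) : ℕ × ℕ)) + M.1
        = (π'.1.parts.map fun j => ((2, j) : ℕ × ℕ)) + M'.1 := by
      have := congrArg Subtype.val h
      simpa [gmap] using this
    obtain ⟨T₁, -, -, hM1⟩ := M.2
    obtain ⟨T₂, -, -, hM2⟩ := M'.2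
    have h2 := congrArg (Multiset.filter (fun b => b.1 = 2)) hval
    rw [filter_two _ _ hM1, filter_two _ _ hM2] at h2
    have hparts : π.1.parts = π'.1.parts :=
      Multiset.map_injective (fun a b hab => by simpa using hab) h2
    have hii : i = i' := by
      apply Fin.ext
      rw [← π.1.parts_sum, ← π'.1.parts_sum, hparts]
    subst hii
    have h1 := congrArg (Multiset.filter (fun b => b.1 = 1)) hval
    rw [filter_one _ _ hM1, filter_one _ _ hM2] at h1
    congr 1
    exact Prod.ext (Subtype.ext (Nat.Partition.ext hparts)) (Subtype.ext h1)
  · rintro ⟨M, hM⟩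
    obtain ⟨T, hT, rfl⟩ := hM
    obtain ⟨i, J, T', hi, hJ, hJsum, hT', hT'b, hTb⟩ := decomp n T hT
    refine ⟨⟨⟨i, by omega⟩,
      ⟨⟨⟨J, fun {j} hj => by have := hJ j hj; omega, hJsum⟩,
        fun h1 => by have := hJ 1 h1; omega⟩,
       ⟨blocksOf T', ⟨T', hT', rfl, hT'b⟩⟩⟩⟩, ?_⟩
    apply Subtype.ext
    exact hTb.symm

/-- `p(2,n) = Σ_{i=0}^n (p(i) - p(i-1)) · p̃(2, n-i)`, with `p(-1) = 0`. -/
theorem rectP_two_convolution (n : ℕ) :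
    (rectP 2 n : ℤ) =
      ∑ i ∈ Finset.range (n + 1),
        ((eulerP i : ℤ) - eulerPZ ((i : ℤ) - 1)) * (ptilde (n - i) : ℤ) := by
  classical
  have h1 : rectP 2 n = Nat.card ↥(Sset n) := rfl
  have h2 : Nat.card ↥(Sset n)
      = Nat.card (Σ i : Fin (n+1), {π : Nat.Partition i.1 // 1 ∉ π.parts} × ↥(Tset (n - i.1))) :=
    (Nat.card_congr (Equiv.ofBijective _ (gmap_bij n))).symm
  have h3 : Nat.card (Σ i : Fin (n+1), {π : Nat.Partition i.1 // 1 ∉ π.parts} × ↥(Tset (n - i.1)))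
      = ∑ i : Fin (n+1), Nat.card ({π : Nat.Partition i.1 // 1 ∉ π.parts} × ↥(Tset (n - i.1))) :=
    natcard_sigma _
  rw [h1, h2, h3]
  rw [Nat.cast_sum]
  rw [← Fin.sum_univ_eq_sum_range
    (fun i => ((eulerP i : ℤ) - eulerPZ ((i : ℤ) - 1)) * (ptilde (n - i) : ℤ)) (n+1)]
  apply Finset.sum_congr rfl
  intro i _
  rw [Nat.card_prod, Nat.cast_mul, card_noOne]
  congr 1
end

section
/- Let k ≥ 1, l ≥ 2 and n ≥ 1. Then p_{k,l}(2,n) ≥ p_A(n), where p_A(n) is the number of tuples (c₁,…,c_k, d₂,…,d_l) of nonnegative integers satisfying Σ_{i=1}^{k} i·c_i + Σ_{j=2}^{l} j·d_j = n (the A-partition function of the multiset A = {1,2,…,k} ⊎ {2,3,…,l}). -/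
/-- The rectangles of one "column piece" at vertical offset `t`:
`(false, w)` gives two stacked `1 × w` blocks, `(true, w)` one `2 × w` block. -/
def pieceRects : Bool × ℕ → ℕ → Finset Rect
  | (false, w), t => {(0, 1, t, t + w), (1, 2, t, t + w)}
  | (true, w), t => {(0, 2, t, t + w)}

/-- Tiling of `[0,2] × [t, t + total width]` from a list of pieces. -/
def tileList : List (Bool × ℕ) → ℕ → Finset Rect
  | [], _ => ∅
  | p :: L, t => pieceRects p t ∪ tileList L (t + p.2)

lemma tileList_bounds (L : List (Bool × ℕ)) (t : ℕ) (hL : ∀ p ∈ L, 1 ≤ p.2) :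
    ∀ R ∈ tileList L t, R.1 < R.2.1 ∧ R.2.1 ≤ 2 ∧ t ≤ R.2.2.1 ∧ R.2.2.1 < R.2.2.2 ∧
      R.2.2.2 ≤ t + (L.map Prod.snd).sum := by
  induction L generalizing t with
  | nil => simp [tileList]
  | cons p L ih =>
    obtain ⟨b, w⟩ := p
    have hw : 1 ≤ w := hL (b, w) (by simp)
    intro R hR
    rw [tileList, Finset.mem_union] at hR
    rcases hR with hR | hR
    · cases b <;> simp [pieceRects] at hR <;> rcases hR with rfl | rfl <;>
        simp_all <;> omega
    · have := ih (t + w) (fun q hq => hL q (List.mem_cons_of_mem _ hq)) R hR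
      simp only [List.map_cons, List.sum_cons]
      omega
lemma tileList_cover (L : List (Bool × ℕ)) (t : ℕ) (hL : ∀ p ∈ L, 1 ≤ p.2) :
    ∀ i < 2, ∀ j, t ≤ j → j < t + (L.map Prod.snd).sum →
      ∃! R, R ∈ tileList L t ∧ cellIn R i j := by
  induction L generalizing t with
  | nil => intro i hi j h1 h2; simp at h2; omega
  | cons p L ih =>
    obtain ⟨b, w⟩ := p
    have hw : 1 ≤ w := hL (b, w) (by simp)
    have hL' : ∀ q ∈ L, 1 ≤ q.2 := fun q hq => hL q (List.mem_cons_of_mem _ hq)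
    intro i hi j h1 h2
    simp only [List.map_cons, List.sum_cons] at h2
    by_cases hj : j < t + w
    · -- covered by the piece
      have hnot : ∀ R ∈ tileList L (t + w), ¬ cellIn R i j := by
        intro R hR hc
        have := (tileList_bounds L (t + w) hL' R hR).2.2.1
        exact absurd hc.2.2.1 (by omega)
      cases b with
      | false =>
        rcases Nat.lt_or_ge i 1 with hi1 | hi1
        · refine ⟨(0, 1, t, t + w), ⟨?_, ?_⟩, ?_⟩
          · rw [tileList]; exact Finset.mem_union_left _ (by simp [pieceRects])
          · exact ⟨Nat.zero_le _, hi1, h1, hj⟩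
          · rintro R ⟨hR, hc⟩
            rw [tileList, Finset.mem_union] at hR
            rcases hR with hR | hR
            · simp [pieceRects] at hR
              rcases hR with rfl | rfl
              · rfl
              · exfalso; simp [cellIn] at hc; omega
            · exact absurd hc (hnot R hR)
        · refine ⟨(1, 2, t, t + w), ⟨?_, ?_⟩, ?_⟩
          · rw [tileList]; exact Finset.mem_union_left _ (by simp [pieceRects])
          · exact ⟨hi1, hi, h1, hj⟩
          · rintro R ⟨hR, hc⟩
            rw [tileList, Finset.mem_union] at hR
            rcases hR with hR | hR
            · simp [pieceRects] at hR
              rcases hR with rfl | rfl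
              · exfalso; simp [cellIn] at hc; omega
              · rfl
            · exact absurd hc (hnot R hR)
      | true =>
        refine ⟨(0, 2, t, t + w), ⟨?_, ?_⟩, ?_⟩
        · rw [tileList]; exact Finset.mem_union_left _ (by simp [pieceRects])
        · exact ⟨Nat.zero_le _, hi, h1, hj⟩
        · rintro R ⟨hR, hc⟩
          rw [tileList, Finset.mem_union] at hR
          rcases hR with hR | hR
          · simp [pieceRects] at hR; subst hR; rfl
          · exact absurd hc (hnot R hR)
    · -- covered by the rest
      obtain ⟨R, ⟨hR, hc⟩, hu⟩ := ih (t + w) hL' i hi j (by omega) (by omega)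
      refine ⟨R, ⟨?_, hc⟩, ?_⟩
      · rw [tileList]; exact Finset.mem_union_right _ hR
      · rintro R' ⟨hR', hc'⟩
        rw [tileList, Finset.mem_union] at hR'
        rcases hR' with hR' | hR'
        · exfalso
          have : R'.2.2.2 ≤ t + w := by
            cases b <;> simp [pieceRects] at hR' <;>
              first
              | (rcases hR' with rfl | rfl <;> simp)
              | (subst hR'; simp)
          exact absurd hc'.2.2.2 (by omega)
        · exact hu R' ⟨hR', hc'⟩
/-- The blocks contributed by a piece. -/
def pieceBlocks : Bool × ℕ → Multiset (ℕ × ℕ)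
  | (false, w) => {(min 1 w, max 1 w), (min 1 w, max 1 w)}
  | (true, w) => {(min 2 w, max 2 w)}

lemma blocks_tileList (L : List (Bool × ℕ)) (t : ℕ) (hL : ∀ p ∈ L, 1 ≤ p.2) :
    blocksOf (tileList L t) = (L.map pieceBlocks).sum := by
  induction L generalizing t with
  | nil => simp [tileList, blocksOf]
  | cons p L ih =>
    obtain ⟨b, w⟩ := p
    have hw : 1 ≤ w := hL (b, w) (by simp)
    have hL' : ∀ q ∈ L, 1 ≤ q.2 := fun q hq => hL q (List.mem_cons_of_mem _ hq)
    have hdisj : Disjoint (pieceRects (b, w) t) (tileList L (t + w)) := by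
      rw [Finset.disjoint_left]
      intro R hR hR'
      have h2 := (tileList_bounds L (t + w) hL' R hR').2.2.1
      cases b <;> simp [pieceRects] at hR <;>
        first
        | (rcases hR with rfl | rfl <;> simp at h2 <;> omega)
        | (subst hR; simp at h2; omega)
    rw [tileList, ← Finset.disjUnion_eq_union _ _ hdisj]
    unfold blocksOf
    have hval : ((pieceRects (b, w) t).disjUnion (tileList L (t + w)) hdisj).val =
        (pieceRects (b, w) t).val + (tileList L (t + w)).val := rfl
    rw [hval, Multiset.map_add]
    rw [show Multiset.map blockOf (tileList L (t + w)).val = blocksOf (tileList L (t + w)) from rfl,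
      ih (t + w) hL']
    simp only [List.map_cons, List.sum_cons]
    congr 1
    cases b
    · have hne : ((0, 1, t, t + w) : Rect) ∉ (({(1, 2, t, t + w)} : Finset Rect)).val := by
        simp
      show Multiset.map blockOf
          (insert ((0, 1, t, t + w) : Rect) ({(1, 2, t, t + w)} : Finset Rect)).val = pieceBlocks (false, w)
      rw [Finset.insert_val, Multiset.ndinsert_of_notMem hne]
      simp [pieceBlocks, blockOf]
    · simp [pieceRects, pieceBlocks, blockOf]
/-- The list of pieces corresponding to a tuple `(c, d)`. -/
def tupleList (k m : ℕ) (c : Fin k → ℕ) (d : Fin m → ℕ) : List (Bool × ℕ) :=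
  ((List.finRange k).flatMap fun i => List.replicate (c i) (false, (i : ℕ) + 1)) ++
    ((List.finRange m).flatMap fun j => List.replicate (d j) (true, (j : ℕ) + 2))

lemma sum_flatMap_replicate {α : Type*} {M : Type*} [AddMonoid M] (l : List α) (g : α → ℕ)
    (x : α → M) :
    (l.flatMap fun a => List.replicate (g a) (x a)).sum = (l.map fun a => g a • x a).sum := by
  induction l with
  | nil => simp
  | cons a l ih => simp [List.flatMap_cons, List.sum_append, ih, List.sum_replicate]

lemma sum_map_tupleList {M : Type*} [AddCommMonoid M] (k m : ℕ) (c : Fin k → ℕ) (d : Fin m → ℕ)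
    (F : Bool × ℕ → M) :
    ((tupleList k m c d).map F).sum =
      (∑ i : Fin k, c i • F (false, (i : ℕ) + 1)) + ∑ j : Fin m, d j • F (true, (j : ℕ) + 2) := by
  unfold tupleList
  rw [List.map_append, List.sum_append, List.map_flatMap, List.map_flatMap]
  congr 1
  · simp only [List.map_replicate]
    rw [sum_flatMap_replicate, Fin.sum_univ_def]
  · simp only [List.map_replicate]
    rw [sum_flatMap_replicate, Fin.sum_univ_def]

lemma mem_tupleList (k m : ℕ) (c : Fin k → ℕ) (d : Fin m → ℕ) (p : Bool × ℕ)
    (hp : p ∈ tupleList k m c d) :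
    (∃ i : Fin k, p = (false, (i : ℕ) + 1)) ∨ ∃ j : Fin m, p = (true, (j : ℕ) + 2) := by
  simp only [tupleList, List.mem_append, List.mem_flatMap, List.mem_replicate] at hp
  rcases hp with ⟨i, -, -, rfl⟩ | ⟨j, -, -, rfl⟩
  · exact Or.inl ⟨i, rfl⟩
  · exact Or.inr ⟨j, rfl⟩

lemma tupleList_pos (k m : ℕ) (c : Fin k → ℕ) (d : Fin m → ℕ) :
    ∀ p ∈ tupleList k m c d, 1 ≤ p.2 := by
  intro p hp
  rcases mem_tupleList k m c d p hp with ⟨i, rfl⟩ | ⟨j, rfl⟩ <;> simp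
/-- The block multiset corresponding to a tuple `(c, d)`. -/
def tupleBlocks (k m : ℕ) (c : Fin k → ℕ) (d : Fin m → ℕ) : Multiset (ℕ × ℕ) :=
  (∑ i : Fin k, c i • ({((1 : ℕ), (i : ℕ) + 1), ((1 : ℕ), (i : ℕ) + 1)} : Multiset (ℕ × ℕ))) +
    ∑ j : Fin m, d j • ({((2 : ℕ), (j : ℕ) + 2)} : Multiset (ℕ × ℕ))

lemma pieceBlocks_false (w : ℕ) (hw : 1 ≤ w) :
    pieceBlocks (false, w) = {((1 : ℕ), w), ((1 : ℕ), w)} := by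
  simp [pieceBlocks, Nat.min_eq_left hw, Nat.max_eq_right hw]

lemma pieceBlocks_true (w : ℕ) (hw : 2 ≤ w) :
    pieceBlocks (true, w) = {((2 : ℕ), w)} := by
  simp [pieceBlocks, Nat.min_eq_left hw, Nat.max_eq_right hw]

lemma blocks_tupleList (k m : ℕ) (c : Fin k → ℕ) (d : Fin m → ℕ) :
    blocksOf (tileList (tupleList k m c d) 0) = tupleBlocks k m c d := by
  rw [blocks_tileList _ 0 (tupleList_pos k m c d), sum_map_tupleList, tupleBlocks]
  congr 1

lemma count_tupleBlocks_one (k m : ℕ) (c : Fin k → ℕ) (d : Fin m → ℕ) (i0 : Fin k) :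
    Multiset.count ((1 : ℕ), (i0 : ℕ) + 1) (tupleBlocks k m c d) = 2 * c i0 := by
  rw [tupleBlocks, Multiset.count_add, Multiset.count_sum', Multiset.count_sum']
  have h1 : ∀ i : Fin k,
      Multiset.count ((1 : ℕ), (i0 : ℕ) + 1)
        (c i • ({((1 : ℕ), (i : ℕ) + 1), ((1 : ℕ), (i : ℕ) + 1)} : Multiset (ℕ × ℕ))) =
      if i = i0 then 2 * c i else 0 := by
    intro i
    rw [Multiset.count_nsmul]
    by_cases h : i = i0
    · subst h; simp [Multiset.insert_eq_cons, Multiset.count_cons, mul_comm]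
    · have hne : ¬(((1 : ℕ), (i0 : ℕ) + 1) = ((1 : ℕ), (i : ℕ) + 1)) := by
        simp only [Prod.mk.injEq, not_and]
        intro _ h2
        exact h (Fin.ext (by omega)).symm
      simp [Multiset.insert_eq_cons, Multiset.count_cons, Multiset.count_singleton, hne, h]
  have h2 : ∀ j : Fin m,
      Multiset.count ((1 : ℕ), (i0 : ℕ) + 1)
        (d j • ({((2 : ℕ), (j : ℕ) + 2)} : Multiset (ℕ × ℕ))) = 0 := by
    intro j
    rw [Multiset.count_nsmul, Multiset.count_singleton]
    simp
  rw [Finset.sum_congr rfl fun i _ => h1 i, Finset.sum_congr rfl fun j _ => h2 j]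
  simp [Finset.sum_ite_eq']

lemma count_tupleBlocks_two (k m : ℕ) (c : Fin k → ℕ) (d : Fin m → ℕ) (j0 : Fin m) :
    Multiset.count ((2 : ℕ), (j0 : ℕ) + 2) (tupleBlocks k m c d) = d j0 := by
  rw [tupleBlocks, Multiset.count_add, Multiset.count_sum', Multiset.count_sum']
  have h1 : ∀ i : Fin k,
      Multiset.count ((2 : ℕ), (j0 : ℕ) + 2)
        (c i • ({((1 : ℕ), (i : ℕ) + 1), ((1 : ℕ), (i : ℕ) + 1)} : Multiset (ℕ × ℕ))) = 0 := by
    intro i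
    rw [Multiset.count_nsmul]
    simp [Multiset.insert_eq_cons, Multiset.count_cons, Multiset.count_singleton]
  have h2 : ∀ j : Fin m,
      Multiset.count ((2 : ℕ), (j0 : ℕ) + 2)
        (d j • ({((2 : ℕ), (j : ℕ) + 2)} : Multiset (ℕ × ℕ))) =
      if j = j0 then d j else 0 := by
    intro j
    rw [Multiset.count_nsmul, Multiset.count_singleton]
    by_cases h : j = j0
    · subst h; simp
    · have hne : ¬(((2 : ℕ), (j0 : ℕ) + 2) = ((2 : ℕ), (j : ℕ) + 2)) := by
        simp only [Prod.mk.injEq, not_and]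
        intro _ h2
        exact h (Fin.ext (by omega)).symm
      simp [hne, h]
  rw [Finset.sum_congr rfl fun i _ => h1 i, Finset.sum_congr rfl fun j _ => h2 j]
  simp [Finset.sum_ite_eq']

lemma tupleBlocks_inj (k m : ℕ) (c c' : Fin k → ℕ) (d d' : Fin m → ℕ)
    (h : tupleBlocks k m c d = tupleBlocks k m c' d') : c = c' ∧ d = d' := by
  constructor
  · funext i
    have := congrArg (Multiset.count ((1 : ℕ), (i : ℕ) + 1)) h
    rw [count_tupleBlocks_one, count_tupleBlocks_one] at this
    omega
  · funext j
    have := congrArg (Multiset.count ((2 : ℕ), (j : ℕ) + 2)) h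
    rw [count_tupleBlocks_two, count_tupleBlocks_two] at this
    exact this
/-- `p_{k,l}(2,n) ≥ p_A(n)` where `p_A(n)` counts tuples `(c₁,…,c_k,d₂,…,d_l)` of
nonnegative integers with `Σ i·c_i + Σ j·d_j = n`. -/
theorem pkl_ge_pA (k l n : ℕ) (hk : 1 ≤ k) (hl : 2 ≤ l) (hn : 1 ≤ n) :
    Nat.card {cd : (Fin k → ℕ) × (Fin (l - 1) → ℕ) //
        (∑ i : Fin k, ((i : ℕ) + 1) * cd.1 i) +
          (∑ j : Fin (l - 1), ((j : ℕ) + 2) * cd.2 j) = n} ≤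
      pkl k l n := by
  classical
  rw [pkl, rectPA]
  set allowed : ℕ × ℕ → Prop :=
    fun b => (b.1 = 1 ∧ 1 ≤ b.2 ∧ b.2 ≤ k) ∨ (b.1 = 2 ∧ 2 ≤ b.2 ∧ b.2 ≤ l) with hall
  set S : Set (Multiset (ℕ × ℕ)) :=
    {M | ∃ T : Finset Rect, IsTiling 2 n T ∧ blocksOf T = M ∧ ∀ b ∈ M, allowed b} with hSdef
  -- finiteness of S
  have hSfin : S.Finite := by
    apply Set.Finite.subset
      (Set.Finite.image blocksOf
        ((Finset.range 3 ×ˢ Finset.range 3 ×ˢ Finset.range (n+1) ×ˢ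
          Finset.range (n+1)).powerset.finite_toSet))
    rintro M ⟨T, hT, rfl, -⟩
    refine ⟨T, ?_, rfl⟩
    rw [Finset.mem_coe, Finset.mem_powerset]
    intro R hR
    have hb := hT.1 R hR
    simp only [Finset.mem_product, Finset.mem_range]
    refine ⟨by omega, by omega, by omega, by omega⟩
  haveI : Finite S := hSfin.to_subtype
  -- membership of the constructed multiset in S
  have hmem : ∀ (c : Fin k → ℕ) (d : Fin (l - 1) → ℕ),
      (∑ i : Fin k, ((i : ℕ) + 1) * c i) + (∑ j : Fin (l - 1), ((j : ℕ) + 2) * d j) = n →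
      tupleBlocks k (l - 1) c d ∈ S := by
    intro c d hcd
    have hpos := tupleList_pos k (l - 1) c d
    have hsum : ((tupleList k (l - 1) c d).map Prod.snd).sum = n := by
      rw [sum_map_tupleList]
      simp only [smul_eq_mul]
      rw [← hcd]
      congr 1 <;> exact Finset.sum_congr rfl fun _ _ => mul_comm _ _
    refine ⟨tileList (tupleList k (l - 1) c d) 0, ⟨?_, ?_⟩, blocks_tupleList k (l - 1) c d, ?_⟩
    · intro R hR
      obtain ⟨h1, h2, h3, h4, h5⟩ := tileList_bounds _ 0 hpos R hR
      exact ⟨h1, h2, h4, by omega⟩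
    · intro i hi j hj
      exact tileList_cover _ 0 hpos i hi j (Nat.zero_le _) (by omega)
    · intro b hb
      rw [tupleBlocks, Multiset.mem_add] at hb
      rcases hb with hb | hb
      · rw [Multiset.mem_sum] at hb
        obtain ⟨i, -, hb⟩ := hb
        have hb' := Multiset.mem_of_mem_nsmul hb
        have hik := i.isLt
        simp only [Multiset.insert_eq_cons, Multiset.mem_cons, Multiset.mem_singleton] at hb'
        rcases hb' with rfl | rfl <;> exact Or.inl ⟨rfl, by omega, by omega⟩
      · rw [Multiset.mem_sum] at hb
        obtain ⟨j, -, hb⟩ := hb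
        have hb' := Multiset.mem_of_mem_nsmul hb
        have hjl := j.isLt
        rw [Multiset.mem_singleton] at hb'
        subst hb'
        exact Or.inr ⟨rfl, by omega, by omega⟩
  -- the injection
  let f : {cd : (Fin k → ℕ) × (Fin (l - 1) → ℕ) //
        (∑ i : Fin k, ((i : ℕ) + 1) * cd.1 i) +
          (∑ j : Fin (l - 1), ((j : ℕ) + 2) * cd.2 j) = n} → S :=
    fun x => ⟨tupleBlocks k (l - 1) x.1.1 x.1.2, hmem x.1.1 x.1.2 x.2⟩
  have hf : Function.Injective f := by
    intro a b hab
    have h : tupleBlocks k (l - 1) a.1.1 a.1.2 = tupleBlocks k (l - 1) b.1.1 b.1.2 :=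
      congrArg Subtype.val hab
    obtain ⟨h1, h2⟩ := tupleBlocks_inj k (l - 1) _ _ _ _ h
    exact Subtype.ext (Prod.ext h1 h2)
  exact Nat.card_le_card_of_injective f hf
end

section
/- For every n ≥ 1, the number p_{3,1}(2,n) of partitions of the 2×n rectangle into blocks of sizes 1×1, 1×2 and 1×3 satisfies: p_{3,1}(2,n) = (n² + 3n + 3)/3 if n ≡ 0 (mod 3), p_{3,1}(2,n) = (n² + 3n + 2)/3 if n ≡ 1 (mod 3), and p_{3,1}(2,n) = (n² + 3n − 1)/3 if n ≡ 2 (mod 3). -/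
instance (R : Rect) (i j : ℕ) : Decidable (cellIn R i j) := by
  unfold cellIn; infer_instance

lemma existsUnique_iff_filter {α : Type*} [DecidableEq α] (s : Finset α) (p : α → Prop)
    [DecidablePred p] : (∃! x, x ∈ s ∧ p x) ↔ (s.filter p).card = 1 := by
  rw [Finset.card_eq_one]
  constructor
  · rintro ⟨x, ⟨hx, hp⟩, hu⟩
    refine ⟨x, ?_⟩
    ext y
    simp only [Finset.mem_filter, Finset.mem_singleton]
    constructor
    · rintro ⟨h1, h2⟩; exact hu y ⟨h1, h2⟩
    · rintro rfl; exact ⟨hx, hp⟩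
  · rintro ⟨x, hx⟩
    have hxm : x ∈ s.filter p := hx ▸ Finset.mem_singleton_self x
    rw [Finset.mem_filter] at hxm
    refine ⟨x, hxm, fun y hy => ?_⟩
    have : y ∈ s.filter p := Finset.mem_filter.2 hy
    rw [hx] at this
    simpa using this

lemma isTiling_iff (m n : ℕ) (T : Finset Rect) :
    IsTiling m n T ↔
      ((∀ R ∈ T, R.1 < R.2.1 ∧ R.2.1 ≤ m ∧ R.2.2.1 < R.2.2.2 ∧ R.2.2.2 ≤ n) ∧
      ∀ i < m, ∀ j < n, (T.filter (fun R => cellIn R i j)).card = 1) := by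
  unfold IsTiling
  refine and_congr Iff.rfl ?_
  refine forall_congr' fun i => forall_congr' fun _ => forall_congr' fun j =>
    forall_congr' fun _ => ?_
  exact existsUnique_iff_filter T (fun R => cellIn R i j)

/-- the standard multiset of blocks: a units, b dominoes, c trominoes -/
def mset (a b c : ℕ) : Multiset (ℕ × ℕ) :=
  Multiset.replicate a (1,1) + Multiset.replicate b (1,2) + Multiset.replicate c (1,3)

lemma count_mset (a b c : ℕ) (x : ℕ × ℕ) :
    (mset a b c).count x =
      if x = (1,1) then a else if x = (1,2) then b else if x = (1,3) then c else 0 := by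
  simp only [mset, Multiset.count_add, Multiset.count_replicate]
  by_cases h1 : x = ((1:ℕ),(1:ℕ))
  · subst h1; norm_num [Prod.ext_iff]
  by_cases h2 : x = ((1:ℕ),(2:ℕ))
  · subst h2; norm_num [Prod.ext_iff]
  by_cases h3 : x = ((1:ℕ),(3:ℕ))
  · subst h3; norm_num [Prod.ext_iff]
  rw [if_neg h1, if_neg h2, if_neg h3,
    if_neg (fun h => h1 h.symm), if_neg (fun h => h2 h.symm), if_neg (fun h => h3 h.symm)]

-- shift embedding
def shiftE (k : ℕ) : Rect ↪ Rect :=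
  ⟨fun R => (R.1, R.2.1, R.2.2.1 + k, R.2.2.2 + k), by
    rintro ⟨a, b, c, d⟩ ⟨a', b', c', d'⟩ h
    simp only [Prod.mk.injEq] at h ⊢
    omega⟩

@[simp] lemma shiftE_apply (k : ℕ) (R : Rect) :
    shiftE k R = (R.1, R.2.1, R.2.2.1 + k, R.2.2.2 + k) := rfl

lemma blockOf_shift (k : ℕ) (R : Rect) : blockOf (shiftE k R) = blockOf R := by
  rcases R with ⟨a, b, c, d⟩
  simp [blockOf, shiftE_apply, Nat.add_sub_add_right]

lemma stack_s15 {k l : ℕ} {T1 T2 : Finset Rect}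
    (h1 : IsTiling 2 k T1) (h2 : IsTiling 2 l T2) :
    ∃ T : Finset Rect, IsTiling 2 (k + l) T ∧ blocksOf T = blocksOf T1 + blocksOf T2 := by
  obtain ⟨hb1, hc1⟩ := h1
  obtain ⟨hb2, hc2⟩ := h2
  have hdisj : Disjoint T1 (T2.map (shiftE k)) := by
    rw [Finset.disjoint_left]
    intro R hR hR'
    obtain ⟨S, hS, hSR⟩ := Finset.mem_map.1 hR'
    have b1 := hb1 R hR
    have b2 := hb2 S hS
    have : R.2.2.1 = S.2.2.1 + k := by rw [← hSR]; rfl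
    omega
  refine ⟨T1.disjUnion (T2.map (shiftE k)) hdisj, ⟨?_, ?_⟩, ?_⟩
  · intro R hR
    rw [Finset.mem_disjUnion] at hR
    rcases hR with hR | hR
    · have := hb1 R hR; omega
    · obtain ⟨S, hS, hSR⟩ := Finset.mem_map.1 hR
      have := hb2 S hS
      subst hSR
      simp only [shiftE_apply]
      omega
  · intro i hi j hj
    by_cases hjk : j < k
    · obtain ⟨R, ⟨hR, hcell⟩, hu⟩ := hc1 i hi j hjk
      refine ⟨R, ⟨Finset.mem_disjUnion.2 (Or.inl hR), hcell⟩, ?_⟩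
      rintro R' ⟨hR', hcell'⟩
      rw [Finset.mem_disjUnion] at hR'
      rcases hR' with hR' | hR'
      · exact hu R' ⟨hR', hcell'⟩
      · obtain ⟨S, hS, hSR⟩ := Finset.mem_map.1 hR'
        exfalso
        have : R'.2.2.1 = S.2.2.1 + k := by rw [← hSR]; rfl
        obtain ⟨_, _, h3, h4⟩ := hcell'
        omega
    · push_neg at hjk
      obtain ⟨S, ⟨hS, hcell⟩, hu⟩ := hc2 i hi (j - k) (by omega)
      refine ⟨shiftE k S, ⟨Finset.mem_disjUnion.2 (Or.inr (Finset.mem_map_of_mem _ hS)), ?_⟩, ?_⟩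
      · obtain ⟨c1, c2, c3, c4⟩ := hcell
        refine ⟨c1, c2, ?_, ?_⟩ <;> simp only [shiftE_apply] <;> omega
      · rintro R' ⟨hR', hcell'⟩
        rw [Finset.mem_disjUnion] at hR'
        rcases hR' with hR' | hR'
        · exfalso
          have := hb1 R' hR'
          obtain ⟨_, _, _, h4⟩ := hcell'
          omega
        · obtain ⟨S', hS', hSR⟩ := Finset.mem_map.1 hR'
          have hcS' : cellIn S' i (j - k) := by
            subst hSR
            obtain ⟨c1, c2, c3, c4⟩ := hcell'
            simp only [shiftE_apply] at c3 c4 ⊢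
            exact ⟨c1, c2, by omega, by omega⟩
          have : S' = S := hu S' ⟨hS', hcS'⟩
          rw [← hSR, this]
  · show Multiset.map blockOf (T1.val + (T2.map (shiftE k)).val) = _
    simp only [Multiset.map_add, Finset.map_val, Multiset.map_map]
    congr 1
    apply Multiset.map_congr rfl
    intro x _
    exact blockOf_shift k x

lemma mset_add (a b c a' b' c' : ℕ) :
    mset a b c + mset a' b' c' = mset (a + a') (b + b') (c + c') := by
  simp only [mset, Multiset.replicate_add]
  abel

def B1 : Finset Rect := {(0,1,0,3),(1,2,0,3)}
def B2a : Finset Rect := {(0,1,0,3),(1,2,0,2),(1,2,2,3)}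
def B2b : Finset Rect := {(0,1,0,3),(1,2,0,1),(1,2,1,2),(1,2,2,3)}
def B3 : Finset Rect := {(0,1,0,1),(1,2,0,1)}
def B4 : Finset Rect := {(0,2,0,1)}

lemma hB1 : IsTiling 2 3 B1 := by rw [isTiling_iff]; decide
lemma hB2a : IsTiling 2 3 B2a := by rw [isTiling_iff]; decide
lemma hB2b : IsTiling 2 3 B2b := by rw [isTiling_iff]; decide
lemma hB3 : IsTiling 2 1 B3 := by rw [isTiling_iff]; decide
lemma hB4 : IsTiling 2 1 B4 := by rw [isTiling_iff]; decide

lemma bB1 : blocksOf B1 = mset 0 0 2 := by decide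
lemma bB2a : blocksOf B2a = mset 1 1 1 := by decide
lemma bB2b : blocksOf B2b = mset 3 0 1 := by decide
lemma bB3 : blocksOf B3 = mset 2 0 0 := by decide
lemma bB4 : blocksOf B4 = mset 0 1 0 := by decide

lemma tiling_empty : IsTiling 2 0 (∅ : Finset Rect) :=
  ⟨fun R h => absurd h (Finset.notMem_empty R), fun _ _ j hj => absurd hj (Nat.not_lt_zero j)⟩

lemma exists_tiling : ∀ n a b c : ℕ, a + 2*b + 3*c = 2*n → c ≤ 2*(n/3) →
    ∃ T : Finset Rect, IsTiling 2 n T ∧ blocksOf T = mset a b c := by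
  intro n
  induction n using Nat.strong_induction_on with
  | _ n ih =>
  intro a b c harea hc
  by_cases h2 : 2 ≤ c
  · have hn : 3 ≤ n := by omega
    obtain ⟨T', hT', hB'⟩ := ih (n-3) (by omega) a b (c-2) (by omega) (by omega)
    obtain ⟨T, hT, hB⟩ := stack_s15 hB1 hT'
    refine ⟨T, by rwa [show 3 + (n-3) = n from by omega] at hT, ?_⟩
    rw [hB, bB1, hB', mset_add, Nat.zero_add, Nat.zero_add,
      show 2 + (c-2) = c from by omega]
  by_cases h1 : c = 1
  · have hn : 3 ≤ n := by omega
    by_cases hb : 1 ≤ b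
    · have ha : 1 ≤ a := by omega
      obtain ⟨T', hT', hB'⟩ := ih (n-3) (by omega) (a-1) (b-1) 0 (by omega) (by omega)
      obtain ⟨T, hT, hB⟩ := stack_s15 hB2a hT'
      refine ⟨T, by rwa [show 3 + (n-3) = n from by omega] at hT, ?_⟩
      rw [hB, bB2a, hB', mset_add]
      congr 1 <;> omega
    · have ha : 3 ≤ a := by omega
      obtain ⟨T', hT', hB'⟩ := ih (n-3) (by omega) (a-3) 0 0 (by omega) (by omega)
      obtain ⟨T, hT, hB⟩ := stack_s15 hB2b hT'
      refine ⟨T, by rwa [show 3 + (n-3) = n from by omega] at hT, ?_⟩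
      rw [hB, bB2b, hB', mset_add]
      congr 1 <;> omega
  · have hc0 : c = 0 := by omega
    by_cases hn0 : n = 0
    · have ha : a = 0 := by omega
      have hb : b = 0 := by omega
      subst ha hb hc0 hn0
      exact ⟨∅, tiling_empty, by decide⟩
    · by_cases ha : 2 ≤ a
      · obtain ⟨T', hT', hB'⟩ := ih (n-1) (by omega) (a-2) b 0 (by omega) (by omega)
        obtain ⟨T, hT, hB⟩ := stack_s15 hB3 hT'
        refine ⟨T, by rwa [show 1 + (n-1) = n from by omega] at hT, ?_⟩
        rw [hB, bB3, hB', mset_add]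
        congr 1 <;> omega
      · have ha0 : a = 0 := by omega
        have hb1 : 1 ≤ b := by omega
        obtain ⟨T', hT', hB'⟩ := ih (n-1) (by omega) 0 (b-1) 0 (by omega) (by omega)
        obtain ⟨T, hT, hB⟩ := stack_s15 hB4 hT'
        refine ⟨T, by rwa [show 1 + (n-1) = n from by omega] at hT, ?_⟩
        rw [hB, bB4, hB', mset_add]
        congr 1 <;> omega

def cells (R : Rect) : Finset (ℕ × ℕ) :=
  Finset.Ico R.1 R.2.1 ×ˢ Finset.Ico R.2.2.1 R.2.2.2

lemma mem_cells {R : Rect} {i j : ℕ} : (i, j) ∈ cells R ↔ cellIn R i j := by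
  simp [cells, cellIn, Finset.mem_product, Finset.mem_Ico, and_assoc]

lemma card_cells (R : Rect) : (cells R).card = (R.2.1 - R.1) * (R.2.2.2 - R.2.2.1) := by
  simp [cells, Nat.card_Ico]

lemma min_mul_max' (u v : ℕ) : min u v * max u v = u * v := by
  rcases le_total u v with h | h
  · rw [min_eq_left h, max_eq_right h]
  · rw [min_eq_right h, max_eq_left h, Nat.mul_comm]

lemma tiling_counts {n : ℕ} {T : Finset Rect} (h : IsTiling 2 n T)
    (hall : ∀ x ∈ blocksOf T, x = ((1:ℕ),(1:ℕ)) ∨ x = ((1:ℕ),(2:ℕ)) ∨ x = ((1:ℕ),(3:ℕ))) :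
    ∃ b c : ℕ, b ≤ n ∧ c ≤ 2*(n/3) ∧ 2*b + 3*c ≤ 2*n ∧
      blocksOf T = mset (2*n - 2*b - 3*c) b c := by
  classical
  obtain ⟨hb, hcov⟩ := h
  set grid : Finset (ℕ × ℕ) := Finset.Ico 0 2 ×ˢ Finset.Ico 0 n with hgriddef
  have hsub : ∀ R ∈ T, cells R ⊆ grid := by
    rintro R hR ⟨i, j⟩ hp
    rw [mem_cells] at hp
    have := hb R hR
    simp only [hgriddef, Finset.mem_product, Finset.mem_Ico]
    obtain ⟨c1, c2, c3, c4⟩ := hp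
    omega
  have hdisj : ∀ R ∈ T, ∀ S ∈ T, R ≠ S → Disjoint (cells R) (cells S) := by
    intro R hR S hS hne
    rw [Finset.disjoint_left]
    rintro ⟨i, j⟩ hpR hpS
    rw [mem_cells] at hpR hpS
    have hbR := hb R hR
    have hi : i < 2 := by obtain ⟨_, c2, _, _⟩ := hpR; omega
    have hj : j < n := by obtain ⟨_, _, _, c4⟩ := hpR; omega
    obtain ⟨U, _, hu⟩ := hcov i hi j hj
    exact hne ((hu R ⟨hR, hpR⟩).trans (hu S ⟨hS, hpS⟩).symm)
  have hgrid : grid = T.biUnion cells := by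
    ext ⟨i, j⟩
    simp only [hgriddef, Finset.mem_product, Finset.mem_Ico, Finset.mem_biUnion]
    constructor
    · rintro ⟨⟨_, hi⟩, ⟨_, hj⟩⟩
      obtain ⟨R, ⟨hR, hcell⟩, _⟩ := hcov i hi j hj
      exact ⟨R, hR, mem_cells.2 hcell⟩
    · rintro ⟨R, hR, hp⟩
      have := hsub R hR hp
      simpa [hgriddef, Finset.mem_product, Finset.mem_Ico] using this
  have hcard : ∑ R ∈ T, (cells R).card = 2 * n := by
    rw [← Finset.card_biUnion hdisj, ← hgrid]
    simp [hgriddef, Nat.card_Ico]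
  -- area identity
  have harea : ((blocksOf T).map (fun p => p.1 * p.2)).sum = 2 * n := by
    rw [blocksOf, Multiset.map_map, ← hcard]
    rw [Finset.sum]
    apply congrArg
    apply Multiset.map_congr rfl
    intro R _
    simp only [Function.comp_apply, blockOf, card_cells]
    exact min_mul_max' _ _
  set a := (blocksOf T).count ((1:ℕ),(1:ℕ)) with ha
  set b := (blocksOf T).count ((1:ℕ),(2:ℕ)) with hbdef
  set c := (blocksOf T).count ((1:ℕ),(3:ℕ)) with hcdef
  have hM : blocksOf T = mset a b c := by
    refine Multiset.ext.2 fun x => ?_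
    rw [count_mset]
    split_ifs with h1 h2 h3
    · rw [h1, ha]
    · rw [h2, hbdef]
    · rw [h3, hcdef]
    · rw [Multiset.count_eq_zero]
      intro hx
      rcases hall x hx with h | h | h <;> tauto
  have hsum : a + 2*b + 3*c = 2*n := by
    rw [hM] at harea
    simp only [mset, Multiset.map_add, Multiset.map_replicate, Multiset.sum_add,
      Multiset.sum_replicate, smul_eq_mul] at harea
    omega
  -- tromino bound
  have hcbound : c ≤ 2 * (n / 3) := by
    set T3 := T.filter (fun R => blockOf R = ((1:ℕ),(3:ℕ))) with hT3def
    have hcT3 : c = T3.card := by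
      rw [hcdef, blocksOf, Multiset.count_map, hT3def, Finset.card_def, Finset.filter_val]
      exact congrArg Multiset.card (Multiset.filter_congr (fun x _ => eq_comm))
    have hdims : ∀ R ∈ T3, R.2.1 = R.1 + 1 ∧ R.2.2.2 - R.2.2.1 = 3 := by
      intro R hR
      rw [hT3def, Finset.mem_filter] at hR
      obtain ⟨hRT, hbl⟩ := hR
      have hbb := hb R hRT
      simp only [blockOf, Prod.mk.injEq] at hbl
      omega
    have hcol : ∀ i : ℕ, 3 * (T3.filter (fun R => R.1 = i)).card ≤ n := by
      intro i
      set T3i := T3.filter (fun R => R.1 = i) with hT3i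
      have hsubcol : T3i.biUnion cells ⊆ {i} ×ˢ Finset.Ico 0 n := by
        rintro ⟨u, v⟩ hp
        rw [Finset.mem_biUnion] at hp
        obtain ⟨R, hR, hpR⟩ := hp
        rw [hT3i, Finset.mem_filter] at hR
        obtain ⟨hR3, hRi⟩ := hR
        have hd := hdims R hR3
        rw [hT3def, Finset.mem_filter] at hR3
        have hbb := hb R hR3.1
        rw [mem_cells] at hpR
        obtain ⟨c1, c2, c3, c4⟩ := hpR
        simp only [Finset.mem_product, Finset.mem_singleton, Finset.mem_Ico]
        omega
      have hdisj3 : ∀ R ∈ T3i, ∀ S ∈ T3i, R ≠ S → Disjoint (cells R) (cells S) := by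
        intro R hR S hS hne
        rw [hT3i, Finset.mem_filter] at hR hS
        rw [hT3def, Finset.mem_filter] at *
        exact hdisj R hR.1.1 S hS.1.1 hne
      have hcard3 : (T3i.biUnion cells).card = 3 * T3i.card := by
        rw [Finset.card_biUnion hdisj3]
        have hc3 : ∀ R ∈ T3i, (cells R).card = 3 := by
          intro R hR
          have hd := hdims R (by rw [hT3i, Finset.mem_filter] at hR; exact hR.1)
          rw [card_cells, hd.1, hd.2]
          omega
        rw [Finset.sum_congr rfl hc3, Finset.sum_const, smul_eq_mul, Nat.mul_comm]
      have := Finset.card_le_card hsubcol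
      rw [hcard3] at this
      simpa [Nat.card_Ico] using this
    have hsplit : T3.card = (T3.filter (fun R => R.1 = 0)).card
        + (T3.filter (fun R => R.1 = 1)).card := by
      rw [← Finset.card_filter_add_card_filter_not (s := T3) (p := fun R => R.1 = 0)]
      congr 1
      apply Finset.card_nbij' id id
      · intro R hR
        rw [Finset.mem_coe, Finset.mem_filter] at hR ⊢
        obtain ⟨hR3, hR1⟩ := hR
        have hd := hdims R hR3
        have hRT : R ∈ T := by
          rw [hT3def, Finset.mem_filter] at hR3; exact hR3.1
        have hbb := hb R hRT
        simp only [id_eq]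
        exact ⟨hR3, by omega⟩
      · intro R hR
        rw [Finset.mem_coe, Finset.mem_filter] at hR ⊢
        obtain ⟨hR3, hR1⟩ := hR
        have hd := hdims R hR3
        have hRT : R ∈ T := by
          rw [hT3def, Finset.mem_filter] at hR3; exact hR3.1
        have hbb := hb R hRT
        simp only [id_eq]
        exact ⟨hR3, by omega⟩
      · intro _ _; rfl
      · intro _ _; rfl
    have h0 := hcol 0
    have h1 := hcol 1
    omega
  exact ⟨b, c, by omega, hcbound, by omega, by rw [hM]; congr 1; omega⟩

def Wn (n : ℕ) : Finset (ℕ × ℕ) :=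
  (Finset.range (n+1) ×ˢ Finset.range (2*(n/3)+1)).filter
    (fun p => 2*p.1 + 3*p.2 ≤ 2*n)

lemma mem_Wn {n : ℕ} {p : ℕ × ℕ} :
    p ∈ Wn n ↔ p.1 ≤ n ∧ p.2 ≤ 2*(n/3) ∧ 2*p.1 + 3*p.2 ≤ 2*n := by
  simp [Wn, Finset.mem_filter, Finset.mem_product, Finset.mem_range, Nat.lt_succ_iff,
    and_assoc]

def gblk (n : ℕ) (p : ℕ × ℕ) : Multiset (ℕ × ℕ) := mset (2*n - 2*p.1 - 3*p.2) p.1 p.2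

lemma setS_eq (n : ℕ) :
    {M : Multiset (ℕ × ℕ) | ∃ T : Finset Rect, IsTiling 2 n T ∧ blocksOf T = M ∧
      ∀ x ∈ M, (x.1 = 1 ∧ 1 ≤ x.2 ∧ x.2 ≤ 3) ∨ (x.1 = 2 ∧ 2 ≤ x.2 ∧ x.2 ≤ 1)} =
    ↑((Wn n).image (gblk n)) := by
  ext M
  simp only [Set.mem_setOf_eq, Finset.coe_image, Set.mem_image, Finset.mem_coe]
  constructor
  · rintro ⟨T, hT, rfl, hP⟩
    have hall : ∀ x ∈ blocksOf T,
        x = ((1:ℕ),(1:ℕ)) ∨ x = ((1:ℕ),(2:ℕ)) ∨ x = ((1:ℕ),(3:ℕ)) := by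
      intro x hx
      have := hP x hx
      rcases x with ⟨u, v⟩
      have huv : u = 1 ∧ (v = 1 ∨ v = 2 ∨ v = 3) := by omega
      obtain ⟨rfl, h | h | h⟩ := huv <;> subst h <;> simp
    obtain ⟨b, c, hbn, hcb, hsum, hM⟩ := tiling_counts hT hall
    exact ⟨(b, c), mem_Wn.2 ⟨hbn, hcb, hsum⟩, hM.symm⟩
  · rintro ⟨⟨b, c⟩, hp, rfl⟩
    rw [mem_Wn] at hp
    obtain ⟨hbn, hcb, hsum⟩ := hp
    obtain ⟨T, hT, hB⟩ := exists_tiling n (2*n - 2*b - 3*c) b c (by omega) hcb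
    refine ⟨T, hT, hB, ?_⟩
    intro x hx
    simp only [gblk, mset, Multiset.mem_add, Multiset.eq_of_mem_replicate] at hx
    rcases hx with (hx | hx) | hx <;>
      rw [Multiset.eq_of_mem_replicate hx] <;> simp
lemma gblk_injOn (n : ℕ) : Set.InjOn (gblk n) (Wn n) := by
  rintro ⟨b, c⟩ _ ⟨b', c'⟩ _ h
  have h2 := congrArg (Multiset.count ((1:ℕ),(2:ℕ))) h
  have h3 := congrArg (Multiset.count ((1:ℕ),(3:ℕ))) h
  simp only [gblk, count_mset] at h2 h3
  norm_num at h2 h3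
  simp [h2, h3]

lemma pkl_eq_Wcard (n : ℕ) : pkl 3 1 n = (Wn n).card := by
  rw [pkl, rectPA]
  rw [show {M : Multiset (ℕ × ℕ) |
      ∃ T : Finset Rect, IsTiling 2 n T ∧ blocksOf T = M ∧ ∀ b ∈ M,
        (b.1 = 1 ∧ 1 ≤ b.2 ∧ b.2 ≤ 3) ∨ (b.1 = 2 ∧ 2 ≤ b.2 ∧ b.2 ≤ 1)} =
      ↑((Wn n).image (gblk n)) from setS_eq n]
  rw [Nat.card_coe_set_eq, Set.ncard_coe_finset]
  exact Finset.card_image_of_injOn (gblk_injOn n)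

lemma W_rec (n : ℕ) : (Wn (n+3)).card = (Wn n).card + (2*n+6) := by
  have hsplit := Finset.card_filter_add_card_filter_not
    (s := Wn (n+3)) (p := fun p => p.2 ≤ 1)
  have hB : ((Wn (n+3)).filter (fun p => ¬ p.2 ≤ 1)).card = (Wn n).card := by
    apply Finset.card_nbij' (fun p => (p.1, p.2 - 2)) (fun p => (p.1, p.2 + 2))
    · rintro ⟨b, c⟩ hp
      rw [Finset.mem_coe, Finset.mem_filter, mem_Wn] at hp
      rw [Finset.mem_coe, mem_Wn]
      simp only at *
      omega
    · rintro ⟨b, c⟩ hp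
      rw [Finset.mem_coe, mem_Wn] at hp
      rw [Finset.mem_coe, Finset.mem_filter, mem_Wn]
      simp only at *
      omega
    · rintro ⟨b, c⟩ hp
      rw [Finset.mem_coe, Finset.mem_filter] at hp
      obtain ⟨-, hc⟩ := hp
      have hc' : ¬ c ≤ 1 := hc
      simp only [Prod.mk.injEq]
      refine ⟨trivial, ?_⟩
      show c - 2 + 2 = c
      omega
    · rintro ⟨b, c⟩ _
      simp
  have hA : ((Wn (n+3)).filter (fun p => p.2 ≤ 1)).card = 2*n + 6 := by
    have hunion : (Wn (n+3)).filter (fun p => p.2 ≤ 1) =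
        ((Finset.range (n+4)).image (fun b => (b, 0))) ∪
        ((Finset.range (n+2)).image (fun b => (b, 1))) := by
      ext ⟨b, c⟩
      simp only [Finset.mem_filter, mem_Wn, Finset.mem_union, Finset.mem_image,
        Finset.mem_range, Prod.mk.injEq]
      constructor
      · rintro ⟨⟨h1, h2, h3⟩, h4⟩
        interval_cases c
        · exact Or.inl ⟨b, by omega, rfl, rfl⟩
        · exact Or.inr ⟨b, by omega, rfl, rfl⟩
      · rintro (⟨x, hx, rfl, rfl⟩ | ⟨x, hx, rfl, rfl⟩) <;>
          refine ⟨⟨by omega, by omega, by omega⟩, by omega⟩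
    rw [hunion, Finset.card_union_of_disjoint, Finset.card_image_of_injective,
      Finset.card_image_of_injective, Finset.card_range, Finset.card_range]
    · omega
    · intro x y h; simpa using h
    · intro x y h; simpa using h
    · rw [Finset.disjoint_left]
      rintro ⟨b, c⟩ h1 h2
      simp only [Finset.mem_image, Finset.mem_range, Prod.mk.injEq] at h1 h2
      obtain ⟨_, _, _, rfl⟩ := h1
      obtain ⟨_, _, _, h⟩ := h2
      omega
  omega

lemma W_form (q : ℕ) :
    (Wn (3*q)).card = 3*q*q + 3*q + 1 ∧
    (Wn (3*q+1)).card = 3*q*q + 5*q + 2 ∧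
    (Wn (3*q+2)).card = 3*q*q + 7*q + 3 := by
  induction q with
  | zero => refine ⟨?_, ?_, ?_⟩ <;> decide
  | succ q ih =>
    obtain ⟨i0, i1, i2⟩ := ih
    have h0 := W_rec (3*q)
    have h1 := W_rec (3*q+1)
    have h2 := W_rec (3*q+2)
    refine ⟨?_, ?_, ?_⟩
    · rw [show 3*(q+1) = 3*q+3 from by ring, h0, i0]; ring
    · rw [show 3*(q+1)+1 = (3*q+1)+3 from by ring, h1, i1]; ring
    · rw [show 3*(q+1)+2 = (3*q+2)+3 from by ring, h2, i2]; ring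


/-- Explicit formula for `p_{3,1}(2,n)` according to `n mod 3`. -/
theorem pkl_three_one_formula (n : ℕ) (hn : 1 ≤ n) :
    (n % 3 = 0 → (pkl 3 1 n : ℚ) = ((n : ℚ) ^ 2 + 3 * n + 3) / 3) ∧
    (n % 3 = 1 → (pkl 3 1 n : ℚ) = ((n : ℚ) ^ 2 + 3 * n + 2) / 3) ∧
    (n % 3 = 2 → (pkl 3 1 n : ℚ) = ((n : ℚ) ^ 2 + 3 * n - 1) / 3) := by
  refine ⟨?_, ?_, ?_⟩ <;> intro h
  · obtain ⟨q, rfl⟩ : ∃ q, n = 3*q := ⟨n/3, by omega⟩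
    rw [pkl_eq_Wcard, (W_form q).1]
    push_cast
    field_simp
  · obtain ⟨q, rfl⟩ : ∃ q, n = 3*q+1 := ⟨n/3, by omega⟩
    rw [pkl_eq_Wcard, (W_form q).2.1]
    push_cast
    field_simp
    ring
  · obtain ⟨q, rfl⟩ : ∃ q, n = 3*q+2 := ⟨n/3, by omega⟩
    rw [pkl_eq_Wcard, (W_form q).2.2]
    push_cast
    field_simp
    ring
end

section
/- For every fixed l ≥ 2 and every n ≥ 1, p_{1,l}(2,n) = p_l(n), where p_l(n) is the number of partitions of n into parts each of size at most l. -/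
namespace PklAux

/-! ### The map from partitions to block multisets -/

def fblock (p : ℕ) : Multiset (ℕ × ℕ) := if p = 1 then {(1,1),(1,1)} else {(2,p)}

def Phi (P : Multiset ℕ) : Multiset (ℕ × ℕ) := P.bind fblock

lemma Phi_add (P Q : Multiset ℕ) : Phi (P + Q) = Phi P + Phi Q :=
  Multiset.add_bind P Q fblock

lemma Phi_replicate_one (k : ℕ) :
    Phi (Multiset.replicate k 1) = Multiset.replicate (2 * k) (1,1) := by
  induction k with
  | zero => simp [Phi]
  | succ k ih =>
    rw [Multiset.replicate_succ, Phi, Multiset.cons_bind]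
    show fblock 1 + Phi (Multiset.replicate k 1) = _
    rw [ih, fblock]
    simp [Multiset.replicate_succ, mul_add]

lemma Phi_of_ne_one (P : Multiset ℕ) (h : ∀ p ∈ P, p ≠ 1) :
    Phi P = P.map (fun p => (2, p)) := by
  rw [Phi, ← Multiset.bind_singleton P (fun p => ((2,p) : ℕ × ℕ))]
  exact Multiset.bind_congr (fun p hp => by simp [fblock, h p hp])

def retr (M : Multiset (ℕ × ℕ)) : Multiset ℕ :=
  (M.filter (fun b => b.1 = 2)).map Prod.snd +
    Multiset.replicate (M.count (1,1) / 2) 1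

lemma retr_Phi (P : Multiset ℕ) : retr (Phi P) = P := by
  have hsplit := Multiset.filter_add_not (fun p => p = 1) P
  set P1 := P.filter (fun p => p = 1) with hP1
  set P2 := P.filter (fun p => ¬ p = 1) with hP2
  have h1 : P1 = Multiset.replicate (Multiset.card P1) 1 :=
    Multiset.eq_replicate_card.mpr (fun b hb => (Multiset.mem_filter.mp hb).2)
  have h2 : ∀ p ∈ P2, p ≠ 1 := fun p hp => (Multiset.mem_filter.mp hp).2
  have key : Phi P = Multiset.replicate (2 * Multiset.card P1) (1,1) +
      P2.map (fun p => (2, p)) := by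
    conv_lhs => rw [← hsplit]
    rw [Phi_add, Phi_of_ne_one P2 h2]
    congr 1
    rw [show Phi P1 = Phi (Multiset.replicate (Multiset.card P1) 1) by rw [← h1]]
    exact Phi_replicate_one _
  rw [key, retr]
  have hf1 : Multiset.filter (fun b => b.1 = 2)
      (Multiset.replicate (2 * Multiset.card P1) ((1,1) : ℕ × ℕ)) = 0 := by
    rw [Multiset.filter_eq_nil]
    intro a ha
    rw [Multiset.eq_of_mem_replicate ha]
    norm_num
  have hf2 : Multiset.filter (fun b => b.1 = 2) (P2.map (fun p => ((2,p) : ℕ × ℕ))) =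
      P2.map (fun p => (2, p)) := by
    rw [Multiset.filter_eq_self]
    intro b hb
    obtain ⟨p, _, rfl⟩ := Multiset.mem_map.mp hb
    rfl
  have hc2 : Multiset.count ((1,1) : ℕ × ℕ) (P2.map (fun p => ((2,p) : ℕ × ℕ))) = 0 := by
    rw [Multiset.count_eq_zero]
    intro hmem
    obtain ⟨p, _, hpe⟩ := Multiset.mem_map.mp hmem
    simp at hpe
  rw [Multiset.filter_add, hf1, hf2, Multiset.count_add, hc2, Multiset.count_replicate]
  simp only [if_pos rfl, zero_add, add_zero]
  rw [Multiset.map_map]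
  have hid : (Prod.snd ∘ fun p => ((2,p) : ℕ × ℕ)) = id := rfl
  rw [hid, Multiset.map_id]
  rw [if_pos trivial, Nat.mul_div_cancel_left _ (by norm_num : (0:ℕ) < 2), ← h1]
  rw [add_comm]
  exact hsplit

lemma Phi_injective : Function.Injective Phi := by
  intro P Q h
  rw [← retr_Phi P, ← retr_Phi Q, h]

/-! ### Area of a tiling -/

def cells (R : Rect) : Finset (ℕ × ℕ) :=
  Finset.Ico R.1 R.2.1 ×ˢ Finset.Ico R.2.2.1 R.2.2.2

lemma mem_cells {R : Rect} {i j : ℕ} : (i, j) ∈ cells R ↔ cellIn R i j := by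
  simp [cells, cellIn, and_assoc]

lemma area_sum {m n : ℕ} {T : Finset Rect} (h : IsTiling m n T) :
    ∑ R ∈ T, (R.2.1 - R.1) * (R.2.2.2 - R.2.2.1) = m * n := by
  obtain ⟨hb, hc⟩ := h
  have hdisj : ∀ R ∈ T, ∀ R' ∈ T, R ≠ R' → Disjoint (cells R) (cells R') := by
    intro R hR R' hR' hne
    rw [Finset.disjoint_left]
    rintro ⟨i, j⟩ hij hij'
    have h1 := mem_cells.mp hij
    have h2 := mem_cells.mp hij'
    have hi : i < m := lt_of_lt_of_le h1.2.1 (hb R hR).2.1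
    have hj : j < n := lt_of_lt_of_le h1.2.2.2 (hb R hR).2.2.2
    obtain ⟨U, _, hU⟩ := hc i hi j hj
    exact hne ((hU R ⟨hR, h1⟩).trans (hU R' ⟨hR', h2⟩).symm)
  have hunion : T.biUnion cells = Finset.range m ×ˢ Finset.range n := by
    ext ⟨i, j⟩
    simp only [Finset.mem_biUnion, Finset.mem_product, Finset.mem_range]
    constructor
    · rintro ⟨R, hR, hij⟩
      have h1 := mem_cells.mp hij
      exact ⟨lt_of_lt_of_le h1.2.1 (hb R hR).2.1, lt_of_lt_of_le h1.2.2.2 (hb R hR).2.2.2⟩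
    · rintro ⟨hi, hj⟩
      obtain ⟨R, ⟨hR, hcell⟩, _⟩ := hc i hi j hj
      exact ⟨R, hR, mem_cells.mpr hcell⟩
  have hcard := Finset.card_biUnion hdisj
  rw [hunion] at hcard
  simp only [Finset.card_product, Finset.card_range] at hcard
  rw [hcard]
  apply Finset.sum_congr rfl
  intro R _
  simp [cells, Nat.card_Ico]

end PklAux

namespace PklAux

def stackTiles : ℕ → List ℕ → List Rect
  | _, [] => []
  | c, p :: rest =>
      (if p = 1 then [((0:ℕ),1,c,c+1), ((1:ℕ),2,c,c+1)] else [((0:ℕ),2,c,c+p)])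
        ++ stackTiles (c+p) rest

lemma mem_stack_cons_one {rest : List ℕ} {c : ℕ} {R : Rect} :
    R ∈ stackTiles c (1 :: rest) ↔
      R = ((0:ℕ),1,c,c+1) ∨ R = ((1:ℕ),2,c,c+1) ∨ R ∈ stackTiles (c+1) rest := by
  simp [stackTiles]

lemma mem_stack_cons_ne {p : ℕ} (h1 : p ≠ 1) {rest : List ℕ} {c : ℕ} {R : Rect} :
    R ∈ stackTiles c (p :: rest) ↔
      R = ((0:ℕ),2,c,c+p) ∨ R ∈ stackTiles (c+p) rest := by
  simp [stackTiles, h1]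

lemma stack_bounds : ∀ (L : List ℕ) (c : ℕ), (∀ p ∈ L, 0 < p) →
    ∀ R ∈ stackTiles c L,
      R.1 < R.2.1 ∧ R.2.1 ≤ 2 ∧ c ≤ R.2.2.1 ∧ R.2.2.1 < R.2.2.2 ∧ R.2.2.2 ≤ c + L.sum
  | [], c, _ => by simp [stackTiles]
  | p :: rest, c, hL => by
    intro R hR
    have hp : 0 < p := hL p (by simp)
    have hrest : ∀ q ∈ rest, 0 < q := fun q hq => hL q (by simp [hq])
    have hsum : (p :: rest).sum = p + rest.sum := List.sum_cons
    by_cases h1 : p = 1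
    · subst h1
      rcases mem_stack_cons_one.mp hR with rfl | rfl | h
      · refine ⟨?_,?_,?_,?_,?_⟩ <;> simp <;> omega
      · refine ⟨?_,?_,?_,?_,?_⟩ <;> simp <;> omega
      · have := stack_bounds rest (c + 1) hrest R h
        rw [hsum]; omega
    · rcases (mem_stack_cons_ne h1).mp hR with rfl | h
      · refine ⟨?_,?_,?_,?_,?_⟩ <;> simp <;> omega
      · have := stack_bounds rest (c + p) hrest R h
        rw [hsum]; omega

lemma stack_cover : ∀ (L : List ℕ) (c : ℕ), (∀ p ∈ L, 0 < p) →
    ∀ i < 2, ∀ j, c ≤ j → j < c + L.sum →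
    ∃! R, R ∈ stackTiles c L ∧ cellIn R i j
  | [], c, _ => by intro i hi j hcj hj; simp at hj; omega
  | p :: rest, c, hL => by
    intro i hi j hcj hj
    have hp : 0 < p := hL p (by simp)
    have hrest : ∀ q ∈ rest, 0 < q := fun q hq => hL q (by simp [hq])
    rw [List.sum_cons] at hj
    by_cases hjp : j < c + p
    · by_cases h1 : p = 1
      · subst h1
        refine ⟨if i = 0 then ((0:ℕ),1,c,c+1) else ((1:ℕ),2,c,c+1), ?_, ?_⟩
        · constructor
          · rw [mem_stack_cons_one]
            split_ifs <;> simp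
          · split_ifs with h0
            · exact ⟨Nat.zero_le _, show i < 1 by omega, hcj, show j < c + 1 by omega⟩
            · exact ⟨show 1 ≤ i by omega, show i < 2 from hi, hcj, show j < c + 1 by omega⟩
        · rintro R' ⟨hmem, hcell⟩
          rcases mem_stack_cons_one.mp hmem with rfl | rfl | h
          · have h2 : i < 1 := hcell.2.1
            simp [show i = 0 by omega]
          · have h2 : 1 ≤ i := hcell.1
            simp [show i ≠ 0 by omega]
          · exfalso
            have hb := stack_bounds rest (c + 1) hrest R' h
            rcases hcell with ⟨_, _, h3, h4⟩
            omega
      · refine ⟨((0:ℕ),2,c,c+p), ?_, ?_⟩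
        · refine ⟨(mem_stack_cons_ne h1).mpr (Or.inl rfl), ?_⟩
          exact ⟨Nat.zero_le _, show i < 2 from hi, hcj, show j < c + p by omega⟩
        · rintro R' ⟨hmem, hcell⟩
          rcases (mem_stack_cons_ne h1).mp hmem with rfl | h
          · rfl
          · exfalso
            have hb := stack_bounds rest (c + p) hrest R' h
            rcases hcell with ⟨_, _, h3, h4⟩
            omega
    · obtain ⟨R, ⟨hmem, hcell⟩, huniq⟩ :=
        stack_cover rest (c + p) hrest i hi j (by omega) (by omega)
      have hmem' : R ∈ stackTiles c (p :: rest) := by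
        by_cases h1 : p = 1
        · subst h1; exact mem_stack_cons_one.mpr (Or.inr (Or.inr hmem))
        · exact (mem_stack_cons_ne h1).mpr (Or.inr hmem)
      refine ⟨R, ⟨hmem', hcell⟩, ?_⟩
      rintro R' ⟨hmem2, hcell'⟩
      by_cases h1 : p = 1
      · subst h1
        rcases mem_stack_cons_one.mp hmem2 with rfl | rfl | h
        · exfalso; rcases hcell' with ⟨_, _, _, h4⟩; simp at h4; omega
        · exfalso; rcases hcell' with ⟨_, _, _, h4⟩; simp at h4; omega
        · exact huniq R' ⟨h, hcell'⟩
      · rcases (mem_stack_cons_ne h1).mp hmem2 with rfl | h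
        · exfalso; rcases hcell' with ⟨_, _, _, h4⟩; simp at h4; omega
        · exact huniq R' ⟨h, hcell'⟩

lemma stack_nodup : ∀ (L : List ℕ) (c : ℕ), (∀ p ∈ L, 0 < p) →
    (stackTiles c L).Nodup
  | [], c, _ => by simp [stackTiles]
  | p :: rest, c, hL => by
    have hp : 0 < p := hL p (by simp)
    have hrest : ∀ q ∈ rest, 0 < q := fun q hq => hL q (by simp [hq])
    have htail := stack_nodup rest (c + p) hrest
    have hnotin : ∀ R : Rect, c ≤ R.2.2.1 → R.2.2.1 < c + p →
        R ∉ stackTiles (c+p) rest := by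
      intro R h1 h2 hmem
      have hb := stack_bounds rest (c + p) hrest R hmem
      omega
    rw [stackTiles, List.nodup_append]
    refine ⟨?_, htail, ?_⟩
    · split_ifs with h1 <;> simp
    · intro R hR
      split_ifs at hR with h1 <;> simp only [List.mem_cons, List.mem_singleton,
        List.not_mem_nil, or_false] at hR
      · rcases hR with rfl | rfl
        · exact fun b hb hab => hnotin ((0:ℕ),1,c,c+1) (le_refl c) (by subst h1; exact Nat.lt_succ_self c) (by rw [hab]; exact hb)
        · exact fun b hb hab => hnotin ((1:ℕ),2,c,c+1) (le_refl c) (by subst h1; exact Nat.lt_succ_self c) (by rw [hab]; exact hb)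
      · subst hR
        exact fun b hb hab => hnotin ((0:ℕ),2,c,c+p) (le_refl c) (show c < c + p by omega) (by rw [hab]; exact hb)

lemma stack_blocks : ∀ (L : List ℕ) (c : ℕ), (∀ p ∈ L, 0 < p) →
    (stackTiles c L).map blockOf
      = L.flatMap (fun p => if p = 1 then [(1,1),(1,1)] else [(2,p)])
  | [], c, _ => by simp [stackTiles]
  | p :: rest, c, hL => by
    have hp : 0 < p := hL p (by simp)
    have hrest : ∀ q ∈ rest, 0 < q := fun q hq => hL q (by simp [hq])
    rw [stackTiles, List.map_append, stack_blocks rest (c+p) hrest, List.flatMap_cons]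
    congr 1
    split_ifs with h1
    · subst h1
      simp [blockOf]
    · have h2 : 2 ≤ p := by omega
      simp [blockOf, Nat.min_eq_left h2, Nat.max_eq_right h2]


end PklAux

namespace PklAux

lemma coe_flatMap_phi : ∀ L : List ℕ,
    ((L.flatMap (fun p => if p = 1 then [(1,1),(1,1)] else [(2,p)]) : List (ℕ × ℕ))
      : Multiset (ℕ × ℕ)) = Phi (↑L : Multiset ℕ)
  | [] => by simp [Phi]
  | p :: L => by
    rw [List.flatMap_cons]
    have h1 : ((p :: L : List ℕ) : Multiset ℕ) = p ::ₘ (↑L : Multiset ℕ) := rfl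
    rw [h1, Phi, Multiset.cons_bind, ← Phi, ← coe_flatMap_phi L]
    rw [← Multiset.coe_add]
    congr 1
    by_cases h : p = 1 <;> simp [fblock, h] <;> rfl

/-- Direction (a): every suitable partition gives rise to a tiling whose block
multiset is `Phi` of its parts. -/
lemma exists_tiling (n : ℕ) (P : Multiset ℕ) (hpos : ∀ p ∈ P, 0 < p)
    (hsum : P.sum = n) :
    ∃ T : Finset Rect, IsTiling 2 n T ∧ blocksOf T = Phi P := by
  classical
  set L := P.toList with hL
  have hposL : ∀ p ∈ L, 0 < p := fun p hp => hpos p (Multiset.mem_toList.mp hp)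
  have hsumL : L.sum = n := by rw [hL, Multiset.sum_toList, hsum]
  have hnodup := stack_nodup L 0 hposL
  refine ⟨(stackTiles 0 L).toFinset, ⟨?_, ?_⟩, ?_⟩
  · intro R hR
    have hb := stack_bounds L 0 hposL R (List.mem_toFinset.mp hR)
    rw [hsumL] at hb
    omega
  · intro i hi j hj
    obtain ⟨R, ⟨hm, hc⟩, hu⟩ :=
      stack_cover L 0 hposL i hi j (Nat.zero_le j) (by omega)
    exact ⟨R, ⟨List.mem_toFinset.mpr hm, hc⟩,
      fun R' hR' => hu R' ⟨List.mem_toFinset.mp hR'.1, hR'.2⟩⟩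
  · rw [blocksOf, List.toFinset_val, List.dedup_eq_self.mpr hnodup]
    have : ((stackTiles 0 L : List Rect) : Multiset Rect).map blockOf
        = ((stackTiles 0 L).map blockOf : List (ℕ × ℕ)) := rfl
    rw [this, stack_blocks L 0 hposL, coe_flatMap_phi, hL, Multiset.coe_toList]

/-- Blocks produced by `Phi` of a suitable partition are allowed. -/
lemma phi_allowed {l : ℕ} (P : Multiset ℕ) (hpos : ∀ p ∈ P, 0 < p)
    (hle : ∀ p ∈ P, p ≤ l) :
    ∀ b ∈ Phi P, (b.1 = 1 ∧ 1 ≤ b.2 ∧ b.2 ≤ 1) ∨ (b.1 = 2 ∧ 2 ≤ b.2 ∧ b.2 ≤ l) := by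
  intro b hb
  obtain ⟨p, hp, hbp⟩ := Multiset.mem_bind.mp hb
  by_cases h1 : p = 1
  · subst h1
    left
    simp [fblock] at hbp
    subst hbp
    exact ⟨rfl, le_refl 1, le_refl 1⟩
  · right
    simp [fblock, h1] at hbp
    subst hbp
    exact ⟨rfl, by have := hpos p hp; omega, hle p hp⟩

/-- Direction (b): every tiling with allowed blocks has block multiset `Phi P`
for some suitable partition `P`. -/
lemma tiling_to_partition {l n : ℕ} (hl : 2 ≤ l) {T : Finset Rect}
    (ht : IsTiling 2 n T)
    (hall : ∀ b ∈ blocksOf T,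
      (b.1 = 1 ∧ 1 ≤ b.2 ∧ b.2 ≤ 1) ∨ (b.1 = 2 ∧ 2 ≤ b.2 ∧ b.2 ≤ l)) :
    ∃ P : Multiset ℕ, (∀ p ∈ P, 0 < p) ∧ (∀ p ∈ P, p ≤ l) ∧ P.sum = n ∧
      Phi P = blocksOf T := by
  classical
  set M := blocksOf T with hM
  -- area of the tiling
  have harea : (M.map (fun b => b.1 * b.2)).sum = 2 * n := by
    have h1 : (M.map (fun b => b.1 * b.2)) =
        T.val.map (fun R => (R.2.1 - R.1) * (R.2.2.2 - R.2.2.1)) := by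
      rw [hM, blocksOf, Multiset.map_map]
      apply Multiset.map_congr rfl
      intro R _
      show min _ _ * max _ _ = _
      exact min_mul_max _ _
    rw [h1]
    exact area_sum ht
  set J := (M.filter (fun b => b.1 = 2)).map Prod.snd with hJ
  set s := Multiset.card (M.filter (fun b => ¬ b.1 = 2)) with hs
  have hsplit := Multiset.filter_add_not (fun b => b.1 = 2) M
  have hrep : M.filter (fun b => ¬ b.1 = 2) = Multiset.replicate s ((1,1) : ℕ × ℕ) := by
    rw [hs]
    apply Multiset.eq_replicate_card.mpr
    intro b hb
    have hmem := Multiset.mem_filter.mp hb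
    rcases hall b hmem.1 with ⟨h1, h2, h3⟩ | ⟨h1, _, _⟩
    · obtain ⟨b1, b2⟩ := b
      simp_all
      omega
    · exact absurd h1 hmem.2
  have hJmem : ∀ q ∈ J, 2 ≤ q ∧ q ≤ l := by
    intro q hq
    obtain ⟨b, hb, rfl⟩ := Multiset.mem_map.mp hq
    have hmem := Multiset.mem_filter.mp hb
    rcases hall b hmem.1 with ⟨h1, _, _⟩ | ⟨_, h2, h3⟩
    · rw [hmem.2] at h1; norm_num at h1
    · exact ⟨h2, h3⟩
  -- compute the area in terms of J and s
  have harea2 : 2 * J.sum + s = 2 * n := by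
    have h1 : (M.map (fun b => b.1 * b.2)).sum =
        ((M.filter (fun b => b.1 = 2)).map (fun b => b.1 * b.2)).sum +
        ((M.filter (fun b => ¬ b.1 = 2)).map (fun b => b.1 * b.2)).sum := by
      conv_lhs => rw [← hsplit]
      rw [Multiset.map_add, Multiset.sum_add]
    have h2 : ((M.filter (fun b => b.1 = 2)).map (fun b => b.1 * b.2)).sum
        = 2 * J.sum := by
      rw [← Multiset.sum_map_mul_left]
      apply congrArg Multiset.sum
      apply Multiset.map_congr rfl
      intro b hb
      have hb2 := (Multiset.mem_filter.mp hb).2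
      rw [hb2]
    have h3 : ((M.filter (fun b => ¬ b.1 = 2)).map (fun b => b.1 * b.2)).sum = s := by
      rw [hrep, Multiset.map_replicate, Multiset.sum_replicate]
      simp
    rw [h1, h2, h3] at harea
    omega
  have hJn : J.sum ≤ n := by omega
  refine ⟨J + Multiset.replicate (n - J.sum) 1, ?_, ?_, ?_, ?_⟩
  · intro p hp
    rcases Multiset.mem_add.mp hp with h | h
    · have := (hJmem p h).1; omega
    · rw [Multiset.eq_of_mem_replicate h]; norm_num
  · intro p hp
    rcases Multiset.mem_add.mp hp with h | h
    · exact (hJmem p h).2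
    · rw [Multiset.eq_of_mem_replicate h]; omega
  · rw [Multiset.sum_add, Multiset.sum_replicate, smul_eq_mul]
    omega
  · have hne1 : ∀ p ∈ J, p ≠ 1 := fun p hp => by have := (hJmem p hp).1; omega
    rw [Phi_add, Phi_of_ne_one J hne1, Phi_replicate_one]
    have hJ2 : J.map (fun p => ((2, p) : ℕ × ℕ)) = M.filter (fun b => b.1 = 2) := by
      rw [hJ, Multiset.map_map]
      have : ∀ b ∈ M.filter (fun b => b.1 = 2),
          ((fun p => ((2, p) : ℕ × ℕ)) ∘ Prod.snd) b = id b := by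
        intro b hb
        have h2 := (Multiset.mem_filter.mp hb).2
        obtain ⟨b1, b2⟩ := b
        change b1 = 2 at h2; subst h2; rfl
      rw [Multiset.map_congr rfl this, Multiset.map_id]
    have hss : 2 * (n - J.sum) = s := by omega
    rw [hJ2, hss, ← hrep]
    exact hsplit

end PklAux

open PklAux

/-- `p_{1,l}(2,n) = p_l(n)`, the number of partitions of `n` into parts of size `≤ l`. -/
theorem pkl_one_l (l n : ℕ) (hl : 2 ≤ l) (hn : 1 ≤ n) :
    pkl 1 l n = Nat.card {lam : Nat.Partition n // ∀ i ∈ lam.parts, i ≤ l} := by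
  classical
  have hinj : Function.Injective
      (fun x : {lam : Nat.Partition n // ∀ i ∈ lam.parts, i ≤ l} => Phi x.1.parts) := by
    intro x y h
    exact Subtype.ext (Nat.Partition.ext (Phi_injective h))
  have hset : {M : Multiset (ℕ × ℕ) |
      ∃ T : Finset Rect, IsTiling 2 n T ∧ blocksOf T = M ∧
        ∀ b ∈ M, (b.1 = 1 ∧ 1 ≤ b.2 ∧ b.2 ≤ 1) ∨ (b.1 = 2 ∧ 2 ≤ b.2 ∧ b.2 ≤ l)}
      = Set.range (fun x : {lam : Nat.Partition n // ∀ i ∈ lam.parts, i ≤ l} =>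
          Phi x.1.parts) := by
    ext M
    constructor
    · rintro ⟨T, ht, rfl, hall⟩
      obtain ⟨P, hpos, hle, hsum, hphi⟩ := tiling_to_partition hl ht hall
      exact ⟨⟨⟨P, fun {i} hi => hpos i hi, hsum⟩, hle⟩, hphi⟩
    · rintro ⟨⟨lam, hle⟩, rfl⟩
      obtain ⟨T, ht, hblocks⟩ :=
        exists_tiling n lam.parts (fun p hp => lam.parts_pos hp) lam.parts_sum
      exact ⟨T, ht, hblocks,
        phi_allowed lam.parts (fun p hp => lam.parts_pos hp) hle⟩
  show rectPA 2 n _ = _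
  rw [rectPA]
  rw [hset, Nat.card_range_of_injective hinj]
end
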